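/- arXiv:1104.3461 — 2 statements merged into one kernel-verified Lean document; each statement's English description precedes it below -/
import Mathlib

section
/- Let l_{β}(x₁,x₂,x₃) = |x₂-x₃|^{β₁}|x₃-x₁|^{β₂}|x₁-x₂|^{β₃} on (ℝ^d)³. If Re(β_j) > -d for j = 1,2,3 and Re(β₁+β₂+β₃) > -2d, then l_β is locally integrable on (ℝ^d)³. -/
open MeasureTheory

open Real Metric Set ENNReal

lemma poly_exists_exponents {D : ℝ} (hD : 0 < D) {a b c : ℝ} (ha : -D < a) (hb : -D < b)
    (hc : -D < c) (hs : -(2*D) < a + b + c) :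
    ∃ a' b' c' : ℝ, a' ≤ a ∧ b' ≤ b ∧ c' ≤ c ∧ -D < a' ∧ a' < 0 ∧ -D < b' ∧ b' < 0 ∧
      -D < c' ∧ c' < 0 ∧ -(2*D) < a' + b' + c' := by
  have hm : -(2*D) < min a 0 + min b 0 + min c 0 := by
    rw [min_def, min_def, min_def]; split_ifs <;> linarith
  set m := min a 0 + min b 0 + min c 0 with hmdef
  set ε := min (D/2) ((m + 2*D)/4) with hε
  have hε0 : 0 < ε := lt_min (by linarith) (by linarith)
  have hεD : ε ≤ D/2 := min_le_left _ _
  have hεm : ε ≤ (m + 2*D)/4 := min_le_right _ _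
  refine ⟨min a (-ε), min b (-ε), min c (-ε), min_le_left _ _, min_le_left _ _, min_le_left _ _,
    lt_min ha (by linarith), lt_of_le_of_lt (min_le_right _ _) (by linarith),
    lt_min hb (by linarith), lt_of_le_of_lt (min_le_right _ _) (by linarith),
    lt_min hc (by linarith), lt_of_le_of_lt (min_le_right _ _) (by linarith), ?_⟩
  have k1 : min a 0 - ε ≤ min a (-ε) := by
    rw [min_def, min_def]; split_ifs <;> linarith
  have k2 : min b 0 - ε ≤ min b (-ε) := by
    rw [min_def, min_def]; split_ifs <;> linarith
  have k3 : min c 0 - ε ≤ min c (-ε) := by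
    rw [min_def, min_def]; split_ifs <;> linarith
  have : m - 3 * ε ≤ min a (-ε) + min b (-ε) + min c (-ε) := by
    rw [hmdef]; linarith
  linarith

lemma poly_exists_split {D : ℝ} (hD : 0 < D) {a b c : ℝ} (ha0 : a < 0)
    (hb : -D < b) (hc : -D < c) (hs : -(2*D) < a + b + c) :
    ∃ s u : ℝ, s ≤ 0 ∧ u ≤ 0 ∧ s + u = a ∧ -D < b + s ∧ -D < c + u := by
  have hLU : max a (-D - b) < min 0 (a + D + c) :=
    max_lt (lt_min ha0 (by linarith)) (lt_min (by linarith) (by linarith))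
  set s := (max a (-D - b) + min 0 (a + D + c)) / 2 with hsdef
  have hL1 : a ≤ max a (-D - b) := le_max_left _ _
  have hL2 : -D - b ≤ max a (-D - b) := le_max_right _ _
  have hU1 : min 0 (a + D + c) ≤ 0 := min_le_left _ _
  have hU2 : min 0 (a + D + c) ≤ a + D + c := min_le_right _ _
  exact ⟨s, a - s, by linarith, by linarith, by ring, by linarith, by linarith⟩

lemma rpow_max_case {x y z a s u : ℝ} (hx : 0 < x) (hy : 0 < y) (hz : 0 < z)
    (hyx : y ≤ x) (hzx : z ≤ x) (hs : s ≤ 0) (hu : u ≤ 0) (hsu : s + u = a) :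
    x ^ a ≤ y ^ s * z ^ u := by
  have h1 : x ^ a = x ^ s * x ^ u := by rw [← Real.rpow_add hx, hsu]
  rw [h1]
  exact mul_le_mul (Real.rpow_le_rpow_of_nonpos hy hyx hs)
    (Real.rpow_le_rpow_of_nonpos hz hzx hu) (Real.rpow_nonneg hx.le u)
    (Real.rpow_nonneg hy.le s)

lemma rpow_lower {x M e e' : ℝ} (hx : 0 < x) (hxM : x ≤ M) (he : e' ≤ e) :
    x ^ e ≤ max 1 (M ^ (e - e')) * x ^ e' := by
  have h1 : x ^ e = x ^ (e - e') * x ^ e' := by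
    rw [← Real.rpow_add hx]; ring_nf
  rw [h1]
  have h2 : x ^ (e - e') ≤ M ^ (e - e') :=
    Real.rpow_le_rpow hx.le hxM (by linarith)
  exact mul_le_mul_of_nonneg_right (h2.trans (le_max_right _ _)) (Real.rpow_nonneg hx.le _)

lemma real_bound {D : ℝ} (hD : 0 < D) {a b c : ℝ} (ha : -D < a) (hb : -D < b) (hc : -D < c)
    (hs : -(2*D) < a + b + c) (M : ℝ) :
    ∃ C : ℝ, 0 ≤ C ∧ ∃ P₁ Q₁ P₂ Q₂ P₃ Q₃ : ℝ,
      -D < P₁ ∧ -D < Q₁ ∧ -D < P₂ ∧ -D < Q₂ ∧ -D < P₃ ∧ -D < Q₃ ∧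
      ∀ x y z : ℝ, 0 < x → x ≤ M → 0 < y → y ≤ M → 0 < z → z ≤ M →
        x ^ a * y ^ b * z ^ c ≤ C * (y ^ P₁ * z ^ Q₁ + x ^ P₂ * z ^ Q₂ + x ^ P₃ * y ^ Q₃) := by
  obtain ⟨a', b', c', haa, hbb, hcc, ha'1, ha'0, hb'1, hb'0, hc'1, hc'0, hs'⟩ :=
    poly_exists_exponents hD ha hb hc hs
  obtain ⟨s₁, u₁, hs₁, hu₁, hsu₁, hP₁, hQ₁⟩ :=
    poly_exists_split hD ha'0 hb'1 hc'1 (by linarith)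
  obtain ⟨s₂, u₂, hs₂, hu₂, hsu₂, hP₂, hQ₂⟩ :=
    poly_exists_split hD hb'0 ha'1 hc'1 (by linarith)
  obtain ⟨s₃, u₃, hs₃, hu₃, hsu₃, hP₃, hQ₃⟩ :=
    poly_exists_split hD hc'0 ha'1 hb'1 (by linarith)
  refine ⟨max 1 (M ^ (a - a')) * max 1 (M ^ (b - b')) * max 1 (M ^ (c - c')), by positivity,
    b' + s₁, c' + u₁, a' + s₂, c' + u₂, a' + s₃, b' + u₃,
    hP₁, hQ₁, hP₂, hQ₂, hP₃, hQ₃, ?_⟩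
  intro x y z hx hxM hy hyM hz hzM
  set C := max 1 (M ^ (a - a')) * max 1 (M ^ (b - b')) * max 1 (M ^ (c - c')) with hC
  have step1 : x ^ a * y ^ b * z ^ c ≤ C * (x ^ a' * y ^ b' * z ^ c') := by
    have e1 := rpow_lower hx hxM haa
    have e2 := rpow_lower hy hyM hbb
    have e3 := rpow_lower hz hzM hcc
    have t1 : x ^ a * y ^ b ≤ (max 1 (M ^ (a - a')) * x ^ a') * (max 1 (M ^ (b - b')) * y ^ b') :=
      mul_le_mul e1 e2 (Real.rpow_nonneg hy.le b) (by positivity)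
    have t2 := mul_le_mul t1 e3 (Real.rpow_nonneg hz.le c) (by positivity)
    calc x ^ a * y ^ b * z ^ c
        ≤ (max 1 (M ^ (a - a')) * x ^ a') * (max 1 (M ^ (b - b')) * y ^ b') *
            (max 1 (M ^ (c - c')) * z ^ c') := t2
      _ = C * (x ^ a' * y ^ b' * z ^ c') := by rw [hC]; ring
  have nn1 : 0 ≤ y ^ (b' + s₁) * z ^ (c' + u₁) := by positivity
  have nn2 : 0 ≤ x ^ (a' + s₂) * z ^ (c' + u₂) := by positivity
  have nn3 : 0 ≤ x ^ (a' + s₃) * y ^ (b' + u₃) := by positivity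
  have step2 : x ^ a' * y ^ b' * z ^ c' ≤
      y ^ (b' + s₁) * z ^ (c' + u₁) + x ^ (a' + s₂) * z ^ (c' + u₂) +
        x ^ (a' + s₃) * y ^ (b' + u₃) := by
    have case1 : ∀ h1 : y ≤ x, ∀ h2 : z ≤ x,
        x ^ a' * y ^ b' * z ^ c' ≤ y ^ (b' + s₁) * z ^ (c' + u₁) := by
      intro h1 h2
      have hm := rpow_max_case hx hy hz h1 h2 hs₁ hu₁ hsu₁
      calc x ^ a' * y ^ b' * z ^ c' ≤ (y ^ s₁ * z ^ u₁) * y ^ b' * z ^ c' := by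
            gcongr
        _ = y ^ (b' + s₁) * z ^ (c' + u₁) := by
            rw [Real.rpow_add hy, Real.rpow_add hz]; ring
    have case2 : ∀ h1 : x ≤ y, ∀ h2 : z ≤ y,
        x ^ a' * y ^ b' * z ^ c' ≤ x ^ (a' + s₂) * z ^ (c' + u₂) := by
      intro h1 h2
      have hm := rpow_max_case hy hx hz h1 h2 hs₂ hu₂ hsu₂
      calc x ^ a' * y ^ b' * z ^ c' = y ^ b' * x ^ a' * z ^ c' := by ring
        _ ≤ (x ^ s₂ * z ^ u₂) * x ^ a' * z ^ c' := by gcongr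
        _ = x ^ (a' + s₂) * z ^ (c' + u₂) := by
            rw [Real.rpow_add hx, Real.rpow_add hz]; ring
    have case3 : ∀ h1 : x ≤ z, ∀ h2 : y ≤ z,
        x ^ a' * y ^ b' * z ^ c' ≤ x ^ (a' + s₃) * y ^ (b' + u₃) := by
      intro h1 h2
      have hm := rpow_max_case hz hx hy h1 h2 hs₃ hu₃ hsu₃
      calc x ^ a' * y ^ b' * z ^ c' = z ^ c' * x ^ a' * y ^ b' := by ring
        _ ≤ (x ^ s₃ * y ^ u₃) * x ^ a' * y ^ b' := by gcongr
        _ = x ^ (a' + s₃) * y ^ (b' + u₃) := by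
            rw [Real.rpow_add hx, Real.rpow_add hy]; ring
    rcases le_total y x with h1 | h1
    · rcases le_total z x with h2 | h2
      · linarith [case1 h1 h2]
      · linarith [case3 h2 (h1.trans h2)]
    · rcases le_total z y with h2 | h2
      · linarith [case2 h1 h2]
      · linarith [case3 (h1.trans h2) h2]
  have hC0 : (0:ℝ) ≤ C := by positivity
  calc x ^ a * y ^ b * z ^ c ≤ C * (x ^ a' * y ^ b' * z ^ c') := step1
    _ ≤ C * (y ^ (b' + s₁) * z ^ (c' + u₁) + x ^ (a' + s₂) * z ^ (c' + u₂) +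
          x ^ (a' + s₃) * y ^ (b' + u₃)) := mul_le_mul_of_nonneg_left step2 hC0

lemma lint_ball_rpow (d : ℕ) (hd : 1 ≤ d) {p : ℝ} (hp : -(d:ℝ) < p) {R : ℝ} (hR : 0 < R) :
    ∫⁻ x in Metric.ball (0 : EuclideanSpace ℝ (Fin d)) R, ENNReal.ofReal (‖x‖ ^ p) < ⊤ := by
  set E := EuclideanSpace ℝ (Fin d) with hE
  rcases le_or_gt 0 p with hp0 | hp0
  · calc ∫⁻ x in Metric.ball (0 : E) R, ENNReal.ofReal (‖x‖ ^ p)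
        ≤ ∫⁻ _x in Metric.ball (0 : E) R, ENNReal.ofReal (R ^ p) := by
          refine setLIntegral_mono' measurableSet_ball fun x hx => ?_
          exact ENNReal.ofReal_le_ofReal
            (Real.rpow_le_rpow (norm_nonneg x) (le_of_lt (mem_ball_zero_iff.1 hx)) hp0)
      _ = ENNReal.ofReal (R ^ p) * volume (Metric.ball (0 : E) R) := setLIntegral_const _ _
      _ < ⊤ := ENNReal.mul_lt_top ENNReal.ofReal_lt_top measure_ball_lt_top
  · have hpne : p ≠ 0 := hp0.ne
    have hmeas : AEMeasurable (fun x : E => ‖x‖ ^ p) (volume.restrict (Metric.ball (0:E) R)) :=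
      (measurable_norm.pow_const p).aemeasurable
    rw [lintegral_eq_lintegral_meas_le _
      (ae_of_all _ fun x => Real.rpow_nonneg (norm_nonneg x) p) hmeas]
    have key : ∀ t : ℝ, 0 < t →
        {a : E | t ≤ ‖a‖ ^ p} ⊆ Metric.closedBall 0 (t ^ p⁻¹) := by
      intro t ht a hA
      simp only [mem_setOf_eq] at hA
      have hna : 0 < ‖a‖ := by
        by_contra h
        push_neg at h
        have h0 : ‖a‖ = 0 := le_antisymm h (norm_nonneg a)
        rw [h0, Real.zero_rpow hpne] at hA
        linarith
      have h1 : (‖a‖ ^ p) ^ p⁻¹ ≤ t ^ p⁻¹ :=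
        Real.rpow_le_rpow_of_nonpos ht hA (inv_nonpos.mpr hp0.le)
      rw [Real.rpow_rpow_inv (norm_nonneg a) hpne] at h1
      exact mem_closedBall_zero_iff.2 h1
    set μ' := volume.restrict (Metric.ball (0:E) R) with hμ'
    calc ∫⁻ t in Ioi (0:ℝ), μ' {a : E | t ≤ ‖a‖ ^ p}
        ≤ ∫⁻ t in Ioc (0:ℝ) 1 ∪ Ioi 1, μ' {a : E | t ≤ ‖a‖ ^ p} :=
          lintegral_mono_set Ioi_subset_Ioc_union_Ioi
      _ ≤ (∫⁻ t in Ioc (0:ℝ) 1, μ' {a : E | t ≤ ‖a‖ ^ p}) +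
            ∫⁻ t in Ioi (1:ℝ), μ' {a : E | t ≤ ‖a‖ ^ p} := lintegral_union_le _ _ _
      _ < ⊤ := by
        refine ENNReal.add_lt_top.2 ⟨?_, ?_⟩
        · calc ∫⁻ t in Ioc (0:ℝ) 1, μ' {a : E | t ≤ ‖a‖ ^ p}
              ≤ ∫⁻ _t in Ioc (0:ℝ) 1, volume (Metric.ball (0:E) R) := by
                refine setLIntegral_mono' measurableSet_Ioc fun t _ => ?_
                rw [hμ']
                exact le_trans (measure_mono (subset_univ _))
                  (le_of_eq (Measure.restrict_apply_univ _))
            _ = volume (Metric.ball (0:E) R) * volume (Ioc (0:ℝ) 1) := setLIntegral_const _ _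
            _ < ⊤ := ENNReal.mul_lt_top measure_ball_lt_top (by simp)
        · have hd1 : (d:ℝ) / p < -1 := by
            rw [div_lt_iff_of_neg hp0]
            linarith
          calc ∫⁻ t in Ioi (1:ℝ), μ' {a : E | t ≤ ‖a‖ ^ p}
              ≤ ∫⁻ t in Ioi (1:ℝ),
                  ENNReal.ofReal (t ^ ((d:ℝ)/p)) * volume (Metric.ball (0:E) 1) := by
                refine setLIntegral_mono' measurableSet_Ioi fun t ht => ?_
                have ht0 : (0:ℝ) < t := lt_trans one_pos ht
                have hb : μ' {a : E | t ≤ ‖a‖ ^ p} ≤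
                    volume (Metric.closedBall (0:E) (t ^ p⁻¹)) := by
                  rw [hμ']
                  exact le_trans (le_trans (Measure.restrict_le_self _)
                    (measure_mono (key t ht0))) le_rfl
                refine hb.trans (le_of_eq ?_)
                rw [Measure.addHaar_closedBall _ _ (Real.rpow_nonneg ht0.le p⁻¹)]
                congr 2
                rw [← Real.rpow_natCast (t ^ p⁻¹) (Module.finrank ℝ E), ← Real.rpow_mul ht0.le]
                have hfr : Module.finrank ℝ E = d := finrank_euclideanSpace_fin
                rw [hfr, inv_mul_eq_div]
            _ = (∫⁻ t in Ioi (1:ℝ), ENNReal.ofReal (t ^ ((d:ℝ)/p))) *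
                  volume (Metric.ball (0:E) 1) :=
                lintegral_mul_const' _ _ measure_ball_lt_top.ne
            _ < ⊤ := ENNReal.mul_lt_top
                ((integrableOn_Ioi_rpow_of_lt hd1 one_pos).setLIntegral_lt_top)
                measure_ball_lt_top

lemma lint_translate (d : ℕ) {p R : ℝ} (y : EuclideanSpace ℝ (Fin d))
    (hy : y ∈ Metric.ball (0 : EuclideanSpace ℝ (Fin d)) R) :
    ∫⁻ x in Metric.ball (0 : EuclideanSpace ℝ (Fin d)) R, ENNReal.ofReal (‖x - y‖ ^ p) ≤
      ∫⁻ u in Metric.ball (0 : EuclideanSpace ℝ (Fin d)) (2*R), ENNReal.ofReal (‖u‖ ^ p) := by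
  have hsub : Metric.ball (0:EuclideanSpace ℝ (Fin d)) R ⊆ Metric.ball y (2*R) := by
    intro x hx
    rw [mem_ball] at hx hy ⊢
    calc dist x y ≤ dist x 0 + dist 0 y := dist_triangle _ _ _
      _ = dist x 0 + dist y 0 := by rw [dist_comm 0 y]
      _ < 2 * R := by linarith
  refine le_trans (lintegral_mono_set hsub) (le_of_eq ?_)
  have hmap : Measure.map (fun u : EuclideanSpace ℝ (Fin d) => u + y) volume = volume :=
    map_add_right_eq_self volume y
  have hF : Measurable fun x : EuclideanSpace ℝ (Fin d) => ENNReal.ofReal (‖x - y‖ ^ p) :=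
    ((measurable_norm.comp (measurable_id.sub_const y)).pow_const p).ennreal_ofReal
  have hG : Measurable fun u : EuclideanSpace ℝ (Fin d) => u + y := measurable_id.add_const y
  conv_lhs => rw [← hmap]
  rw [setLIntegral_map measurableSet_ball hF hG]
  have hpre : (fun u : EuclideanSpace ℝ (Fin d) => u + y) ⁻¹' Metric.ball y (2*R) = Metric.ball (0:EuclideanSpace ℝ (Fin d)) (2*R) := by
    ext u
    simp [mem_ball, dist_eq_norm]
  rw [hpre]
  congr 1
  ext u
  simp

lemma measurable_cpow_const (β : ℂ) : Measurable fun x : ℂ => x ^ β := by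
  have h : (fun x : ℂ => x ^ β) = fun x =>
      if x = 0 then (if β = 0 then 1 else 0) else Complex.exp (Complex.log x * β) := by
    ext x
    rw [Complex.cpow_def]
  rw [h]
  refine Measurable.ite ?_ measurable_const
    (Complex.measurable_exp.comp (Complex.measurable_log.mul_const β))
  exact MeasurableSet.congr (measurableSet_singleton (0:ℂ)) (by ext x; simp)

lemma diag_pair_null (d : ℕ) (hd : 1 ≤ d) :
    volume {q : EuclideanSpace ℝ (Fin d) × EuclideanSpace ℝ (Fin d) | q.1 = q.2} = 0 := by
  haveI : Nonempty (Fin d) := ⟨⟨0, by omega⟩⟩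
  haveI : Nontrivial (EuclideanSpace ℝ (Fin d)) := inferInstance
  rw [Measure.volume_eq_prod _ _,
    Measure.prod_apply (measurableSet_eq_fun measurable_fst measurable_snd)]
  have h : ∀ y : EuclideanSpace ℝ (Fin d),
      (volume : Measure (EuclideanSpace ℝ (Fin d)))
        (Prod.mk y ⁻¹' {q : EuclideanSpace ℝ (Fin d) × EuclideanSpace ℝ (Fin d) |
          q.1 = q.2}) = 0 := by
    intro y
    have he : (Prod.mk y ⁻¹' {q : EuclideanSpace ℝ (Fin d) × EuclideanSpace ℝ (Fin d) |
        q.1 = q.2}) = {y} := by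
      ext z; simp [eq_comm]
    rw [he]
    exact measure_singleton y
  simp [h]

lemma diag_null₁ (d : ℕ) (hd : 1 ≤ d) :
    volume {p : EuclideanSpace ℝ (Fin d) × EuclideanSpace ℝ (Fin d) ×
      EuclideanSpace ℝ (Fin d) | p.2.1 = p.2.2} = 0 := by
  rw [Measure.volume_eq_prod _ _]
  have he : {p : EuclideanSpace ℝ (Fin d) × EuclideanSpace ℝ (Fin d) ×
      EuclideanSpace ℝ (Fin d) | p.2.1 = p.2.2} =
      (univ : Set (EuclideanSpace ℝ (Fin d))) ×ˢ
        {q : EuclideanSpace ℝ (Fin d) × EuclideanSpace ℝ (Fin d) | q.1 = q.2} := by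
    ext p; simp
  rw [he, Measure.prod_prod, diag_pair_null d hd, mul_zero]

lemma diag_null₂ (d : ℕ) (hd : 1 ≤ d) :
    volume {p : EuclideanSpace ℝ (Fin d) × EuclideanSpace ℝ (Fin d) ×
      EuclideanSpace ℝ (Fin d) | p.2.2 = p.1} = 0 := by
  haveI : Nonempty (Fin d) := ⟨⟨0, by omega⟩⟩
  haveI : Nontrivial (EuclideanSpace ℝ (Fin d)) := inferInstance
  have hms : MeasurableSet {p : EuclideanSpace ℝ (Fin d) × EuclideanSpace ℝ (Fin d) ×
      EuclideanSpace ℝ (Fin d) | p.2.2 = p.1} :=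
    measurableSet_eq_fun measurable_snd.snd measurable_fst
  rw [Measure.volume_eq_prod _ _, Measure.prod_apply hms]
  have h : ∀ x : EuclideanSpace ℝ (Fin d),
      (volume : Measure (EuclideanSpace ℝ (Fin d) × EuclideanSpace ℝ (Fin d)))
        (Prod.mk x ⁻¹' {p : EuclideanSpace ℝ (Fin d) × EuclideanSpace ℝ (Fin d) ×
          EuclideanSpace ℝ (Fin d) | p.2.2 = p.1}) = 0 := by
    intro x
    have he : (Prod.mk x ⁻¹' {p : EuclideanSpace ℝ (Fin d) × EuclideanSpace ℝ (Fin d) ×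
        EuclideanSpace ℝ (Fin d) | p.2.2 = p.1}) =
        (univ : Set (EuclideanSpace ℝ (Fin d))) ×ˢ ({x} : Set (EuclideanSpace ℝ (Fin d))) := by
      ext q
      simp only [mem_preimage, mem_setOf_eq, Set.mem_prod, mem_univ, mem_singleton_iff, true_and]
    rw [he, Measure.volume_eq_prod _ _, Measure.prod_prod, measure_singleton, mul_zero]
  rw [lintegral_congr h, lintegral_zero]

lemma diag_null₃ (d : ℕ) (hd : 1 ≤ d) :
    volume {p : EuclideanSpace ℝ (Fin d) × EuclideanSpace ℝ (Fin d) ×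
      EuclideanSpace ℝ (Fin d) | p.1 = p.2.1} = 0 := by
  haveI : Nonempty (Fin d) := ⟨⟨0, by omega⟩⟩
  haveI : Nontrivial (EuclideanSpace ℝ (Fin d)) := inferInstance
  have hms : MeasurableSet {p : EuclideanSpace ℝ (Fin d) × EuclideanSpace ℝ (Fin d) ×
      EuclideanSpace ℝ (Fin d) | p.1 = p.2.1} :=
    measurableSet_eq_fun measurable_fst measurable_snd.fst
  rw [Measure.volume_eq_prod _ _, Measure.prod_apply hms]
  have h : ∀ x : EuclideanSpace ℝ (Fin d),
      (volume : Measure (EuclideanSpace ℝ (Fin d) × EuclideanSpace ℝ (Fin d)))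
        (Prod.mk x ⁻¹' {p : EuclideanSpace ℝ (Fin d) × EuclideanSpace ℝ (Fin d) ×
          EuclideanSpace ℝ (Fin d) | p.1 = p.2.1}) = 0 := by
    intro x
    have he : (Prod.mk x ⁻¹' {p : EuclideanSpace ℝ (Fin d) × EuclideanSpace ℝ (Fin d) ×
        EuclideanSpace ℝ (Fin d) | p.1 = p.2.1}) =
        ({x} : Set (EuclideanSpace ℝ (Fin d))) ×ˢ (univ : Set (EuclideanSpace ℝ (Fin d))) := by
      ext q
      simp only [mem_preimage, mem_setOf_eq, Set.mem_prod, mem_univ, mem_singleton_iff, and_true]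
      exact eq_comm
    rw [he, Measure.volume_eq_prod _ _, Measure.prod_prod, measure_singleton, zero_mul]
  rw [lintegral_congr h, lintegral_zero]

lemma lint_translate' (d : ℕ) {p R : ℝ} (y : EuclideanSpace ℝ (Fin d))
    (hy : y ∈ Metric.ball (0 : EuclideanSpace ℝ (Fin d)) R) :
    ∫⁻ x in Metric.ball (0 : EuclideanSpace ℝ (Fin d)) R, ENNReal.ofReal (‖y - x‖ ^ p) ≤
      ∫⁻ u in Metric.ball (0 : EuclideanSpace ℝ (Fin d)) (2*R), ENNReal.ofReal (‖u‖ ^ p) := by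
  refine le_trans (le_of_eq (lintegral_congr fun x => ?_)) (lint_translate d y hy)
  rw [norm_sub_rev]

section
variable {d : ℕ}

local notation "E" => EuclideanSpace ℝ (Fin d)

lemma restrict_three {R : ℝ} :
    (volume : Measure (E × E × E)).restrict
        (Metric.ball (0:E) R ×ˢ Metric.ball (0:E) R ×ˢ Metric.ball (0:E) R) =
      (volume.restrict (Metric.ball (0:E) R)).prod
        ((volume.restrict (Metric.ball (0:E) R)).prod
          (volume.restrict (Metric.ball (0:E) R))) := by
  rw [Measure.volume_eq_prod _ _, ← Measure.prod_restrict, Measure.volume_eq_prod _ _,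
    ← Measure.prod_restrict]

lemma two_factor₁ (hd : 1 ≤ d) {P Q R : ℝ} (hP : -(d:ℝ) < P) (hQ : -(d:ℝ) < Q) (hR : 0 < R) :
    ∫⁻ p in (Metric.ball (0:E) R ×ˢ Metric.ball (0:E) R ×ˢ Metric.ball (0:E) R),
      ENNReal.ofReal (‖p.2.2 - p.1‖ ^ P) * ENNReal.ofReal (‖p.1 - p.2.1‖ ^ Q) < ⊤ := by
  set B := Metric.ball (0:E) R with hB
  set μB := volume.restrict B with hμB
  set J := ∫⁻ u in Metric.ball (0:E) (2*R), ENNReal.ofReal (‖u‖ ^ P) with hJ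
  set K := ∫⁻ u in Metric.ball (0:E) (2*R), ENNReal.ofReal (‖u‖ ^ Q) with hK
  have hJt : J < ⊤ := lint_ball_rpow d hd hP (by linarith)
  have hKt : K < ⊤ := lint_ball_rpow d hd hQ (by linarith)
  have hFmeas : Measurable fun p : E × E × E =>
      ENNReal.ofReal (‖p.2.2 - p.1‖ ^ P) * ENNReal.ofReal (‖p.1 - p.2.1‖ ^ Q) :=
    (((measurable_norm.comp (measurable_snd.snd.sub measurable_fst)).pow_const P).ennreal_ofReal).mul
      (((measurable_norm.comp (measurable_fst.sub measurable_snd.fst)).pow_const Q).ennreal_ofReal)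
  rw [restrict_three, lintegral_prod _ (hFmeas.aemeasurable)]
  have hinner : ∀ x : E, x ∈ B →
      (∫⁻ q : E × E, ENNReal.ofReal (‖q.2 - x‖ ^ P) * ENNReal.ofReal (‖x - q.1‖ ^ Q)
        ∂(μB.prod μB)) ≤ K * J := by
    intro x hx
    have hqmeas : Measurable fun q : E × E =>
        ENNReal.ofReal (‖q.2 - x‖ ^ P) * ENNReal.ofReal (‖x - q.1‖ ^ Q) :=
      (((measurable_norm.comp (measurable_snd.sub measurable_const)).pow_const P).ennreal_ofReal).mul
        (((measurable_norm.comp (measurable_const.sub measurable_fst)).pow_const Q).ennreal_ofReal)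
    rw [lintegral_prod _ hqmeas.aemeasurable]
    calc ∫⁻ y, ∫⁻ z, ENNReal.ofReal (‖z - x‖ ^ P) * ENNReal.ofReal (‖x - y‖ ^ Q) ∂μB ∂μB
        = ∫⁻ y, (∫⁻ z, ENNReal.ofReal (‖z - x‖ ^ P) ∂μB) * ENNReal.ofReal (‖x - y‖ ^ Q) ∂μB := by
          refine lintegral_congr fun y => ?_
          exact lintegral_mul_const' _ _ ENNReal.ofReal_ne_top
      _ ≤ ∫⁻ y, J * ENNReal.ofReal (‖x - y‖ ^ Q) ∂μB := by
          refine lintegral_mono fun y => ?_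
          exact mul_le_mul_left (lint_translate d x hx) _
      _ = J * ∫⁻ y, ENNReal.ofReal (‖x - y‖ ^ Q) ∂μB := lintegral_const_mul' _ _ hJt.ne
      _ ≤ J * K := mul_le_mul_right (lint_translate' d x hx) _
      _ = K * J := mul_comm _ _
  calc ∫⁻ x, ∫⁻ q : E × E, ENNReal.ofReal (‖q.2 - x‖ ^ P) * ENNReal.ofReal (‖x - q.1‖ ^ Q)
        ∂(μB.prod μB) ∂μB
      ≤ ∫⁻ _x, K * J ∂μB := by
        refine lintegral_mono_ae ?_
        filter_upwards [ae_restrict_mem measurableSet_ball] with x hx using hinner x hx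
    _ = K * J * μB univ := lintegral_const _
    _ < ⊤ := by
        refine ENNReal.mul_lt_top (ENNReal.mul_lt_top hKt hJt) ?_
        rw [hμB, Measure.restrict_apply_univ]
        exact measure_ball_lt_top

lemma two_factor₂ (hd : 1 ≤ d) {P Q R : ℝ} (hP : -(d:ℝ) < P) (hQ : -(d:ℝ) < Q) (hR : 0 < R) :
    ∫⁻ p in (Metric.ball (0:E) R ×ˢ Metric.ball (0:E) R ×ˢ Metric.ball (0:E) R),
      ENNReal.ofReal (‖p.2.1 - p.2.2‖ ^ P) * ENNReal.ofReal (‖p.1 - p.2.1‖ ^ Q) < ⊤ := by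
  set B := Metric.ball (0:E) R with hB
  set μB := volume.restrict B with hμB
  set J := ∫⁻ u in Metric.ball (0:E) (2*R), ENNReal.ofReal (‖u‖ ^ P) with hJ
  set K := ∫⁻ u in Metric.ball (0:E) (2*R), ENNReal.ofReal (‖u‖ ^ Q) with hK
  have hJt : J < ⊤ := lint_ball_rpow d hd hP (by linarith)
  have hKt : K < ⊤ := lint_ball_rpow d hd hQ (by linarith)
  have hFmeas : Measurable fun p : E × E × E =>
      ENNReal.ofReal (‖p.2.1 - p.2.2‖ ^ P) * ENNReal.ofReal (‖p.1 - p.2.1‖ ^ Q) :=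
    (((measurable_norm.comp (measurable_snd.fst.sub measurable_snd.snd)).pow_const P).ennreal_ofReal).mul
      (((measurable_norm.comp (measurable_fst.sub measurable_snd.fst)).pow_const Q).ennreal_ofReal)
  rw [restrict_three, lintegral_prod _ (hFmeas.aemeasurable)]
  have hinner : ∀ x : E, x ∈ B →
      (∫⁻ q : E × E, ENNReal.ofReal (‖q.1 - q.2‖ ^ P) * ENNReal.ofReal (‖x - q.1‖ ^ Q)
        ∂(μB.prod μB)) ≤ J * K := by
    intro x hx
    have hqmeas : Measurable fun q : E × E =>
        ENNReal.ofReal (‖q.1 - q.2‖ ^ P) * ENNReal.ofReal (‖x - q.1‖ ^ Q) :=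
      (((measurable_norm.comp (measurable_fst.sub measurable_snd)).pow_const P).ennreal_ofReal).mul
        (((measurable_norm.comp (measurable_const.sub measurable_fst)).pow_const Q).ennreal_ofReal)
    rw [lintegral_prod _ hqmeas.aemeasurable]
    calc ∫⁻ y, ∫⁻ z, ENNReal.ofReal (‖y - z‖ ^ P) * ENNReal.ofReal (‖x - y‖ ^ Q) ∂μB ∂μB
        = ∫⁻ y, (∫⁻ z, ENNReal.ofReal (‖y - z‖ ^ P) ∂μB) * ENNReal.ofReal (‖x - y‖ ^ Q) ∂μB := by
          refine lintegral_congr fun y => ?_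
          exact lintegral_mul_const' _ _ ENNReal.ofReal_ne_top
      _ ≤ ∫⁻ y, J * ENNReal.ofReal (‖x - y‖ ^ Q) ∂μB := by
          refine lintegral_mono_ae ?_
          filter_upwards [ae_restrict_mem measurableSet_ball] with y hy
          exact mul_le_mul_left (lint_translate' d y hy) _
      _ = J * ∫⁻ y, ENNReal.ofReal (‖x - y‖ ^ Q) ∂μB := lintegral_const_mul' _ _ hJt.ne
      _ ≤ J * K := mul_le_mul_right (lint_translate' d x hx) _
  calc ∫⁻ x, ∫⁻ q : E × E, ENNReal.ofReal (‖q.1 - q.2‖ ^ P) * ENNReal.ofReal (‖x - q.1‖ ^ Q)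
        ∂(μB.prod μB) ∂μB
      ≤ ∫⁻ _x, J * K ∂μB := by
        refine lintegral_mono_ae ?_
        filter_upwards [ae_restrict_mem measurableSet_ball] with x hx using hinner x hx
    _ = J * K * μB univ := lintegral_const _
    _ < ⊤ := by
        refine ENNReal.mul_lt_top (ENNReal.mul_lt_top hJt hKt) ?_
        rw [hμB, Measure.restrict_apply_univ]
        exact measure_ball_lt_top

lemma two_factor₃ (hd : 1 ≤ d) {P Q R : ℝ} (hP : -(d:ℝ) < P) (hQ : -(d:ℝ) < Q) (hR : 0 < R) :
    ∫⁻ p in (Metric.ball (0:E) R ×ˢ Metric.ball (0:E) R ×ˢ Metric.ball (0:E) R),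
      ENNReal.ofReal (‖p.2.1 - p.2.2‖ ^ P) * ENNReal.ofReal (‖p.2.2 - p.1‖ ^ Q) < ⊤ := by
  set B := Metric.ball (0:E) R with hB
  set μB := volume.restrict B with hμB
  set J := ∫⁻ u in Metric.ball (0:E) (2*R), ENNReal.ofReal (‖u‖ ^ P) with hJ
  set K := ∫⁻ u in Metric.ball (0:E) (2*R), ENNReal.ofReal (‖u‖ ^ Q) with hK
  have hJt : J < ⊤ := lint_ball_rpow d hd hP (by linarith)
  have hKt : K < ⊤ := lint_ball_rpow d hd hQ (by linarith)
  have hFmeas : Measurable fun p : E × E × E =>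
      ENNReal.ofReal (‖p.2.1 - p.2.2‖ ^ P) * ENNReal.ofReal (‖p.2.2 - p.1‖ ^ Q) :=
    (((measurable_norm.comp (measurable_snd.fst.sub measurable_snd.snd)).pow_const P).ennreal_ofReal).mul
      (((measurable_norm.comp (measurable_snd.snd.sub measurable_fst)).pow_const Q).ennreal_ofReal)
  rw [restrict_three, lintegral_prod _ (hFmeas.aemeasurable)]
  have hinner : ∀ x : E, x ∈ B →
      (∫⁻ q : E × E, ENNReal.ofReal (‖q.1 - q.2‖ ^ P) * ENNReal.ofReal (‖q.2 - x‖ ^ Q)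
        ∂(μB.prod μB)) ≤ J * K := by
    intro x hx
    have hqmeas : Measurable fun q : E × E =>
        ENNReal.ofReal (‖q.1 - q.2‖ ^ P) * ENNReal.ofReal (‖q.2 - x‖ ^ Q) :=
      (((measurable_norm.comp (measurable_fst.sub measurable_snd)).pow_const P).ennreal_ofReal).mul
        (((measurable_norm.comp (measurable_snd.sub measurable_const)).pow_const Q).ennreal_ofReal)
    rw [lintegral_prod _ hqmeas.aemeasurable]
    have hswap : ∫⁻ y, ∫⁻ z, ENNReal.ofReal (‖y - z‖ ^ P) * ENNReal.ofReal (‖z - x‖ ^ Q) ∂μB ∂μB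
        = ∫⁻ z, ∫⁻ y, ENNReal.ofReal (‖y - z‖ ^ P) * ENNReal.ofReal (‖z - x‖ ^ Q) ∂μB ∂μB :=
      lintegral_lintegral_swap hqmeas.aemeasurable
    rw [hswap]
    calc ∫⁻ z, ∫⁻ y, ENNReal.ofReal (‖y - z‖ ^ P) * ENNReal.ofReal (‖z - x‖ ^ Q) ∂μB ∂μB
        = ∫⁻ z, (∫⁻ y, ENNReal.ofReal (‖y - z‖ ^ P) ∂μB) * ENNReal.ofReal (‖z - x‖ ^ Q) ∂μB := by
          refine lintegral_congr fun z => ?_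
          exact lintegral_mul_const' _ _ ENNReal.ofReal_ne_top
      _ ≤ ∫⁻ z, J * ENNReal.ofReal (‖z - x‖ ^ Q) ∂μB := by
          refine lintegral_mono_ae ?_
          filter_upwards [ae_restrict_mem measurableSet_ball] with z hz
          exact mul_le_mul_left (lint_translate d z hz) _
      _ = J * ∫⁻ z, ENNReal.ofReal (‖z - x‖ ^ Q) ∂μB := lintegral_const_mul' _ _ hJt.ne
      _ ≤ J * K := mul_le_mul_right (lint_translate d x hx) _
  calc ∫⁻ x, ∫⁻ q : E × E, ENNReal.ofReal (‖q.1 - q.2‖ ^ P) * ENNReal.ofReal (‖q.2 - x‖ ^ Q)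
        ∂(μB.prod μB) ∂μB
      ≤ ∫⁻ _x, J * K ∂μB := by
        refine lintegral_mono_ae ?_
        filter_upwards [ae_restrict_mem measurableSet_ball] with x hx using hinner x hx
    _ = J * K * μB univ := lintegral_const _
    _ < ⊤ := by
        refine ENNReal.mul_lt_top (ENNReal.mul_lt_top hJt hKt) ?_
        rw [hμB, Measure.restrict_apply_univ]
        exact measure_ball_lt_top
end

/-- If `Re β_j > -d` for `j = 1,2,3` and `Re(β₁+β₂+β₃) > -2d`, then the kernel
`l_β(x₁,x₂,x₃) = |x₂-x₃|^{β₁} |x₃-x₁|^{β₂} |x₁-x₂|^{β₃}` is locally integrable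
on `(ℝ^d)³`. -/
theorem kernel_locallyIntegrable (d : ℕ) (hd : 2 ≤ d) (β₁ β₂ β₃ : ℂ)
    (h₁ : -(d : ℝ) < β₁.re) (h₂ : -(d : ℝ) < β₂.re) (h₃ : -(d : ℝ) < β₃.re)
    (hsum : -(2 * d : ℝ) < (β₁ + β₂ + β₃).re) :
    LocallyIntegrable
      (fun p : EuclideanSpace ℝ (Fin d) × EuclideanSpace ℝ (Fin d) ×
          EuclideanSpace ℝ (Fin d) =>
        (‖p.2.1 - p.2.2‖ : ℂ) ^ β₁ * (‖p.2.2 - p.1‖ : ℂ) ^ β₂ *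
          (‖p.1 - p.2.1‖ : ℂ) ^ β₃)
      volume := by
  have hd1 : 1 ≤ d := le_trans one_le_two hd
  have hD : (0:ℝ) < d := by exact_mod_cast Nat.lt_of_lt_of_le Nat.zero_lt_one hd1
  have hsum' : -(2 * (d:ℝ)) < β₁.re + β₂.re + β₃.re := by
    simpa [Complex.add_re] using hsum
  set f : EuclideanSpace ℝ (Fin d) × EuclideanSpace ℝ (Fin d) ×
      EuclideanSpace ℝ (Fin d) → ℂ := fun p =>
    (‖p.2.1 - p.2.2‖ : ℂ) ^ β₁ * (‖p.2.2 - p.1‖ : ℂ) ^ β₂ * (‖p.1 - p.2.1‖ : ℂ) ^ β₃ with hf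
  have hfm : Measurable f := by
    refine Measurable.mul (Measurable.mul ?_ ?_) ?_
    · exact (measurable_cpow_const β₁).comp (Complex.measurable_ofReal.comp
        (measurable_norm.comp (measurable_snd.fst.sub measurable_snd.snd)))
    · exact (measurable_cpow_const β₂).comp (Complex.measurable_ofReal.comp
        (measurable_norm.comp (measurable_snd.snd.sub measurable_fst)))
    · exact (measurable_cpow_const β₃).comp (Complex.measurable_ofReal.comp
        (measurable_norm.comp (measurable_fst.sub measurable_snd.fst)))
  rw [MeasureTheory.locallyIntegrable_iff]
  intro K hK
  obtain ⟨R, hR0, hKR⟩ := hK.isBounded.subset_ball_lt 0 0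
  have hball : Metric.ball (0 : EuclideanSpace ℝ (Fin d) × EuclideanSpace ℝ (Fin d) ×
      EuclideanSpace ℝ (Fin d)) R =
      Metric.ball (0:EuclideanSpace ℝ (Fin d)) R ×ˢ Metric.ball (0:EuclideanSpace ℝ (Fin d)) R
        ×ˢ Metric.ball (0:EuclideanSpace ℝ (Fin d)) R := by
    rw [ball_prod_same, ball_prod_same]
    rfl
  rw [hball] at hKR
  set B := Metric.ball (0:EuclideanSpace ℝ (Fin d)) R with hB
  refine IntegrableOn.mono_set ?_ hKR
  have hSmeas : MeasurableSet (B ×ˢ B ×ˢ B) :=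
    measurableSet_ball.prod (measurableSet_ball.prod measurableSet_ball)
  obtain ⟨C, hC0, P₁, Q₁, P₂, Q₂, P₃, Q₃, hP₁, hQ₁, hP₂, hQ₂, hP₃, hQ₃, hbound⟩ :=
    real_bound hD h₁ h₂ h₃ hsum' (2*R)
  constructor
  · exact hfm.aestronglyMeasurable
  rw [hasFiniteIntegral_iff_norm]
  set T₁ : EuclideanSpace ℝ (Fin d) × EuclideanSpace ℝ (Fin d) ×
      EuclideanSpace ℝ (Fin d) → ℝ≥0∞ := fun p =>
    ENNReal.ofReal (‖p.2.2 - p.1‖ ^ P₁) * ENNReal.ofReal (‖p.1 - p.2.1‖ ^ Q₁) with hT₁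
  set T₂ : EuclideanSpace ℝ (Fin d) × EuclideanSpace ℝ (Fin d) ×
      EuclideanSpace ℝ (Fin d) → ℝ≥0∞ := fun p =>
    ENNReal.ofReal (‖p.2.1 - p.2.2‖ ^ P₂) * ENNReal.ofReal (‖p.1 - p.2.1‖ ^ Q₂) with hT₂
  set T₃ : EuclideanSpace ℝ (Fin d) × EuclideanSpace ℝ (Fin d) ×
      EuclideanSpace ℝ (Fin d) → ℝ≥0∞ := fun p =>
    ENNReal.ofReal (‖p.2.1 - p.2.2‖ ^ P₃) * ENNReal.ofReal (‖p.2.2 - p.1‖ ^ Q₃) with hT₃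
  have hT₁m : Measurable T₁ :=
    (((measurable_norm.comp (measurable_snd.snd.sub measurable_fst)).pow_const P₁).ennreal_ofReal).mul
      (((measurable_norm.comp (measurable_fst.sub measurable_snd.fst)).pow_const Q₁).ennreal_ofReal)
  have hT₂m : Measurable T₂ :=
    (((measurable_norm.comp (measurable_snd.fst.sub measurable_snd.snd)).pow_const P₂).ennreal_ofReal).mul
      (((measurable_norm.comp (measurable_fst.sub measurable_snd.fst)).pow_const Q₂).ennreal_ofReal)
  have hT₃m : Measurable T₃ :=
    (((measurable_norm.comp (measurable_snd.fst.sub measurable_snd.snd)).pow_const P₃).ennreal_ofReal).mul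
      (((measurable_norm.comp (measurable_snd.snd.sub measurable_fst)).pow_const Q₃).ennreal_ofReal)
  -- the null set of diagonals
  have hNae : ∀ᵐ p : EuclideanSpace ℝ (Fin d) × EuclideanSpace ℝ (Fin d) ×
      EuclideanSpace ℝ (Fin d) ∂volume,
      ¬(p.2.1 = p.2.2) ∧ ¬(p.2.2 = p.1) ∧ ¬(p.1 = p.2.1) := by
    have a1 : ∀ᵐ p : EuclideanSpace ℝ (Fin d) × EuclideanSpace ℝ (Fin d) ×
        EuclideanSpace ℝ (Fin d) ∂volume, ¬(p.2.1 = p.2.2) :=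
      measure_eq_zero_iff_ae_notMem.1 (diag_null₁ d hd1)
    have a2 : ∀ᵐ p : EuclideanSpace ℝ (Fin d) × EuclideanSpace ℝ (Fin d) ×
        EuclideanSpace ℝ (Fin d) ∂volume, ¬(p.2.2 = p.1) :=
      measure_eq_zero_iff_ae_notMem.1 (diag_null₂ d hd1)
    have a3 : ∀ᵐ p : EuclideanSpace ℝ (Fin d) × EuclideanSpace ℝ (Fin d) ×
        EuclideanSpace ℝ (Fin d) ∂volume, ¬(p.1 = p.2.1) :=
      measure_eq_zero_iff_ae_notMem.1 (diag_null₃ d hd1)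
    filter_upwards [a1, a2, a3] with p u1 u2 u3 using ⟨u1, u2, u3⟩
  have hptwise : ∀ p : EuclideanSpace ℝ (Fin d) × EuclideanSpace ℝ (Fin d) ×
      EuclideanSpace ℝ (Fin d), p ∈ B ×ˢ B ×ˢ B →
      ¬(p.2.1 = p.2.2) → ¬(p.2.2 = p.1) → ¬(p.1 = p.2.1) →
      ENNReal.ofReal ‖f p‖ ≤ ENNReal.ofReal C * (T₁ p + T₂ p + T₃ p) := by
    intro p hp hn1 hn2 hn3
    obtain ⟨hp1, hp2, hp3⟩ : p.1 ∈ B ∧ p.2.1 ∈ B ∧ p.2.2 ∈ B := by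
      exact ⟨hp.1, hp.2.1, hp.2.2⟩
    rw [hB, mem_ball_zero_iff] at hp1 hp2 hp3
    set x := ‖p.2.1 - p.2.2‖ with hx
    set y := ‖p.2.2 - p.1‖ with hy
    set z := ‖p.1 - p.2.1‖ with hz
    have hx0 : 0 < x := norm_pos_iff.2 (sub_ne_zero.2 hn1)
    have hy0 : 0 < y := norm_pos_iff.2 (sub_ne_zero.2 hn2)
    have hz0 : 0 < z := norm_pos_iff.2 (sub_ne_zero.2 hn3)
    have hxM : x ≤ 2*R := le_of_lt (lt_of_le_of_lt (norm_sub_le _ _) (by linarith))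
    have hyM : y ≤ 2*R := le_of_lt (lt_of_le_of_lt (norm_sub_le _ _) (by linarith))
    have hzM : z ≤ 2*R := le_of_lt (lt_of_le_of_lt (norm_sub_le _ _) (by linarith))
    have hnorm : ‖f p‖ = x ^ β₁.re * y ^ β₂.re * z ^ β₃.re := by
      rw [hf]
      simp only [norm_mul]
      rw [Complex.norm_cpow_eq_rpow_re_of_pos hx0, Complex.norm_cpow_eq_rpow_re_of_pos hy0,
        Complex.norm_cpow_eq_rpow_re_of_pos hz0]
    rw [hnorm]
    have hb := hbound x y z hx0 hxM hy0 hyM hz0 hzM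
    refine le_trans (ENNReal.ofReal_le_ofReal hb) (le_of_eq ?_)
    rw [ENNReal.ofReal_mul hC0]
    congr 1
    rw [ENNReal.ofReal_add (by positivity) (by positivity),
      ENNReal.ofReal_add (by positivity) (by positivity),
      ENNReal.ofReal_mul (by positivity), ENNReal.ofReal_mul (by positivity),
      ENNReal.ofReal_mul (by positivity)]
  calc ∫⁻ p in B ×ˢ B ×ˢ B, ENNReal.ofReal ‖f p‖
      ≤ ∫⁻ p in B ×ˢ B ×ˢ B, ENNReal.ofReal C * (T₁ p + T₂ p + T₃ p) := by
        refine lintegral_mono_ae ?_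
        filter_upwards [ae_restrict_mem hSmeas, ae_restrict_of_ae hNae] with p hp hn
        exact hptwise p hp hn.1 hn.2.1 hn.2.2
    _ = ENNReal.ofReal C * ((∫⁻ p in B ×ˢ B ×ˢ B, T₁ p) + (∫⁻ p in B ×ˢ B ×ˢ B, T₂ p) +
          (∫⁻ p in B ×ˢ B ×ˢ B, T₃ p)) := by
        rw [lintegral_const_mul' _ _ ENNReal.ofReal_ne_top,
          lintegral_add_right _ hT₃m, lintegral_add_right _ hT₂m]
    _ < ⊤ := by
        refine ENNReal.mul_lt_top ENNReal.ofReal_lt_top ?_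
        refine ENNReal.add_lt_top.2 ⟨ENNReal.add_lt_top.2 ⟨?_, ?_⟩, ?_⟩
        · exact two_factor₁ hd1 hP₁ hQ₁ hR0
        · exact two_factor₂ hd1 hP₂ hQ₂ hR0
        · exact two_factor₃ hd1 hP₃ hQ₃ hR0
end

section
/- Bernstein–Sato identity (k=0 check at smooth points): for β = (β₁,β₂,β₃) ∈ ℂ³, on the open set of (ℝ^d)³ where x₁, x₂, x₃ are pairwise distinct, the differential operator B_β applied to the smooth function l_{β+2₁}(x₁,x₂,x₃) = |x₂-x₃|^{β₁+2}|x₃-x₁|^{β₂}|x₁-x₂|^{β₃} equals b(β)·|x₂-x₃|^{β₁}|x₃-x₁|^{β₂}|x₁-x₂|^{β₃}, where b(β) = (β₁+d)(β₁+2)(β₁+β₂+β₃+2d)(β₁+β₂+β₃+d+2). -/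
noncomputable section

variable {d : ℕ}

/-- Partial derivative in the `j`-th coordinate of the first (`y`) variable. -/
def Dy (j : Fin d) (u : EuclideanSpace ℝ (Fin d) × EuclideanSpace ℝ (Fin d) → ℂ) :
    EuclideanSpace ℝ (Fin d) × EuclideanSpace ℝ (Fin d) → ℂ :=
  fun p => fderiv ℝ u p (EuclideanSpace.single j 1, 0)

/-- Partial derivative in the `j`-th coordinate of the second (`z`) variable. -/
def Dz (j : Fin d) (u : EuclideanSpace ℝ (Fin d) × EuclideanSpace ℝ (Fin d) → ℂ) :
    EuclideanSpace ℝ (Fin d) × EuclideanSpace ℝ (Fin d) → ℂ :=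
  fun p => fderiv ℝ u p (0, EuclideanSpace.single j 1)

/-- The Laplacian `Δ_y` in the first variable. -/
def LapY (u : EuclideanSpace ℝ (Fin d) × EuclideanSpace ℝ (Fin d) → ℂ) :
    EuclideanSpace ℝ (Fin d) × EuclideanSpace ℝ (Fin d) → ℂ :=
  fun p => ∑ j : Fin d, Dy j (Dy j u) p

/-- The Laplacian `Δ_z` in the second variable. -/
def LapZ (u : EuclideanSpace ℝ (Fin d) × EuclideanSpace ℝ (Fin d) → ℂ) :
    EuclideanSpace ℝ (Fin d) × EuclideanSpace ℝ (Fin d) → ℂ :=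
  fun p => ∑ j : Fin d, Dz j (Dz j u) p

/-- The Bernstein–Sato operator `B_β`, acting in the variables `(y,z) = (x₂,x₃)`. -/
def Bop (β₁ β₂ β₃ : ℂ)
    (u : EuclideanSpace ℝ (Fin d) × EuclideanSpace ℝ (Fin d) → ℂ) :
    EuclideanSpace ℝ (Fin d) × EuclideanSpace ℝ (Fin d) → ℂ :=
  fun p =>
    (‖p.1 - p.2‖ ^ 2 : ℝ) * LapY (LapZ u) p
      + 2 * (β₃ + β₁ + (d : ℂ)) *
          ∑ j : Fin d, ((p.2 j - p.1 j : ℝ) : ℂ) * Dy j (LapZ u) p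
      + 2 * (β₂ + β₁ + (d : ℂ)) *
          ∑ j : Fin d, ((p.1 j - p.2 j : ℝ) : ℂ) * Dz j (LapY u) p
      + (β₃ + β₁ + (d : ℂ)) * (β₃ + β₁ + 2) * LapZ u p
      + (β₂ + β₁ + (d : ℂ)) * (β₂ + β₁ + 2) * LapY u p
      - 2 * (β₃ + β₁ + (d : ℂ)) * (β₂ + β₁ + (d : ℂ)) *
          ∑ j : Fin d, Dy j (Dz j u) p

open Complex

abbrev Es (d : ℕ) := EuclideanSpace ℝ (Fin d)
abbrev Pt (d : ℕ) := Es d × Es d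

def nq (α : ℂ) (v : Es d) : ℂ := ((‖v‖ ^ 2 : ℝ) : ℂ) ^ α

lemma sq_pos {v : Es d} (hv : v ≠ 0) : (0:ℝ) < ‖v‖ ^ 2 := pow_pos (norm_pos_iff.2 hv) 2

lemma nq_base_ne {v : Es d} (hv : v ≠ 0) : ((‖v‖ ^ 2 : ℝ) : ℂ) ≠ 0 := by
  exact_mod_cast (sq_pos hv).ne'

lemma nq_ne_zero {v : Es d} (hv : v ≠ 0) (α : ℂ) : nq α v ≠ 0 := by
  simp only [nq, ne_eq, cpow_eq_zero_iff, not_and_or, not_not]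
  exact Or.inl (nq_base_ne hv)

lemma nq_succ {v : Es d} (hv : v ≠ 0) (α : ℂ) :
    nq (α + 1) v = ((‖v‖ ^ 2 : ℝ) : ℂ) * nq α v := by
  simp only [nq, cpow_add _ _ (nq_base_ne hv), cpow_one]; ring

lemma hasFDerivAt_nq_comp {g : Pt d → Es d} {F : Pt d →L[ℝ] Es d} {p : Pt d}
    (hg : HasFDerivAt g F p) (h0 : g p ≠ 0) (α : ℂ) :
    HasFDerivAt (fun q => nq α (g q))
      ((2 * α * nq (α - 1) (g p)) • (Complex.ofRealCLM.comp ((innerSL ℝ (g p)).comp F))) p := by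
  have hρ : (0:ℝ) < ‖g p‖ ^ 2 := sq_pos h0
  have hslit : ((‖g p‖ ^ 2 : ℝ) : ℂ) ∈ slitPlane := ofReal_mem_slitPlane.2 hρ
  have h1 : HasFDerivAt (fun q => ‖g q‖ ^ 2) (2 • (innerSL ℝ (g p)).comp F) p := hg.norm_sq
  have h2 : HasFDerivAt (fun q => ((‖g q‖ ^ 2 : ℝ) : ℂ))
      (Complex.ofRealCLM.comp (2 • (innerSL ℝ (g p)).comp F)) p :=
    Complex.ofRealCLM.hasFDerivAt.comp p h1
  have h3 : HasDerivAt (fun z : ℂ => z ^ α) (α * ((‖g p‖ ^ 2 : ℝ) : ℂ) ^ (α - 1))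
      ((‖g p‖ ^ 2 : ℝ) : ℂ) := (Complex.hasStrictDerivAt_cpow_const hslit).hasDerivAt
  have h4 := (h3.hasFDerivAt.restrictScalars ℝ).comp p h2
  refine h4.congr_fderiv ?_
  refine ContinuousLinearMap.ext fun w => ?_
  simp only [ContinuousLinearMap.smul_apply, ContinuousLinearMap.comp_apply,
    ContinuousLinearMap.coe_restrictScalars', ContinuousLinearMap.smulRight_apply,
    ContinuousLinearMap.one_apply, Complex.ofRealCLM_apply, smul_eq_mul, two_smul,
    innerSL_apply_apply, ContinuousLinearMap.toSpanSingleton_apply, nq, Complex.ofReal_add, Pi.add_apply, Function.comp_apply,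
    ContinuousLinearMap.add_apply]
  push_cast
  ring


def Mf (x : Es d) (α β γ : ℂ) : Pt d → ℂ :=
  fun p => nq α (p.1 - p.2) * nq β (p.2 - x) * nq γ (x - p.1)

def cr (j : Fin d) (p : Pt d) : ℂ := ((p.1 j - p.2 j : ℝ) : ℂ)
def cs (x : Es d) (j : Fin d) (p : Pt d) : ℂ := ((p.2 j - x j : ℝ) : ℂ)
def ct (x : Es d) (j : Fin d) (p : Pt d) : ℂ := ((x j - p.1 j : ℝ) : ℂ)

variable {x : Es d} {p : Pt d} {α β γ : ℂ} {j : Fin d}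

lemma hF1 (p : Pt d) : HasFDerivAt (fun q : Pt d => q.1 - q.2)
    (ContinuousLinearMap.fst ℝ (Es d) (Es d) - ContinuousLinearMap.snd ℝ (Es d) (Es d)) p :=
  hasFDerivAt_fst.sub hasFDerivAt_snd

lemma hF2 (x : Es d) (p : Pt d) : HasFDerivAt (fun q : Pt d => q.2 - x)
    (ContinuousLinearMap.snd ℝ (Es d) (Es d)) p := by
  simpa using (hasFDerivAt_snd (𝕜 := ℝ) (p := p)).sub_const x

lemma hF3 (x : Es d) (p : Pt d) : HasFDerivAt (fun q : Pt d => x - q.1)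
    (-(ContinuousLinearMap.fst ℝ (Es d) (Es d))) p := by
  simpa only [zero_sub] using (hasFDerivAt_const (𝕜 := ℝ) x p).fun_sub hasFDerivAt_fst

section MfDeriv

variable (h1 : p.1 ≠ p.2) (h2 : p.2 ≠ x) (h3 : x ≠ p.1)

lemma diff_Mf (h1 : p.1 ≠ p.2) (h2 : p.2 ≠ x) (h3 : x ≠ p.1) :
    DifferentiableAt ℝ (Mf x α β γ) p := by
  have hA := hasFDerivAt_nq_comp (hF1 p) (sub_ne_zero.2 h1) α
  have hB := hasFDerivAt_nq_comp (hF2 x p) (sub_ne_zero.2 h2) β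
  have hC := hasFDerivAt_nq_comp (hF3 x p) (sub_ne_zero.2 h3) γ
  exact ((hA.mul hB).mul hC).differentiableAt

lemma Dy_Mf (h1 : p.1 ≠ p.2) (h2 : p.2 ≠ x) (h3 : x ≠ p.1) :
    Dy j (Mf x α β γ) p =
      2 * α * cr j p * Mf x (α - 1) β γ p - 2 * γ * ct x j p * Mf x α β (γ - 1) p := by
  have hA := hasFDerivAt_nq_comp (hF1 p) (sub_ne_zero.2 h1) α
  have hB := hasFDerivAt_nq_comp (hF2 x p) (sub_ne_zero.2 h2) β
  have hC := hasFDerivAt_nq_comp (hF3 x p) (sub_ne_zero.2 h3) γ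
  have hM := (hA.fun_mul hB).fun_mul hC
  have hfd : fderiv ℝ (Mf x α β γ) p = _ := hM.fderiv
  rw [Dy, hfd]
  simp only [ContinuousLinearMap.add_apply, ContinuousLinearMap.smul_apply,
    ContinuousLinearMap.comp_apply, ContinuousLinearMap.sub_apply, ContinuousLinearMap.neg_apply,
    ContinuousLinearMap.coe_fst', ContinuousLinearMap.coe_snd', Complex.ofRealCLM_apply,
    innerSL_apply_apply, smul_eq_mul, sub_zero, inner_zero_right, inner_neg_right,
    EuclideanSpace.inner_single_right, conj_trivial, Complex.ofReal_zero, Complex.ofReal_neg,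
    mul_zero, zero_mul, add_zero, zero_add, one_mul, Complex.ofReal_mul, PiLp.sub_apply]
  simp only [Mf, cr, ct, Complex.ofReal_sub]
  ring

lemma Dz_Mf (h1 : p.1 ≠ p.2) (h2 : p.2 ≠ x) (h3 : x ≠ p.1) :
    Dz j (Mf x α β γ) p =
      -(2 * α) * cr j p * Mf x (α - 1) β γ p + 2 * β * cs x j p * Mf x α (β - 1) γ p := by
  have hA := hasFDerivAt_nq_comp (hF1 p) (sub_ne_zero.2 h1) α
  have hB := hasFDerivAt_nq_comp (hF2 x p) (sub_ne_zero.2 h2) β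
  have hC := hasFDerivAt_nq_comp (hF3 x p) (sub_ne_zero.2 h3) γ
  have hM := (hA.fun_mul hB).fun_mul hC
  have hfd : fderiv ℝ (Mf x α β γ) p = _ := hM.fderiv
  rw [Dz, hfd]
  simp only [ContinuousLinearMap.add_apply, ContinuousLinearMap.smul_apply,
    ContinuousLinearMap.comp_apply, ContinuousLinearMap.sub_apply, ContinuousLinearMap.neg_apply,
    ContinuousLinearMap.coe_fst', ContinuousLinearMap.coe_snd', Complex.ofRealCLM_apply,
    innerSL_apply_apply, smul_eq_mul, zero_sub, inner_zero_right, inner_neg_right,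
    EuclideanSpace.inner_single_right, conj_trivial, Complex.ofReal_zero, Complex.ofReal_neg,
    neg_zero, mul_zero, zero_mul, add_zero, zero_add, one_mul, Complex.ofReal_mul, PiLp.sub_apply]
  simp only [Mf, cr, cs, Complex.ofReal_sub]
  ring

end MfDeriv

section Algebra

variable {f g : Pt d → ℂ}

lemma Dy_congr_nhds (h : f =ᶠ[nhds p] g) (j : Fin d) : Dy j f p = Dy j g p := by
  rw [Dy, Dy, h.fderiv_eq]

lemma Dz_congr_nhds (h : f =ᶠ[nhds p] g) (j : Fin d) : Dz j f p = Dz j g p := by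
  rw [Dz, Dz, h.fderiv_eq]

def Uset (x : Es d) : Set (Pt d) := {q | q.1 ≠ q.2 ∧ q.2 ≠ x ∧ x ≠ q.1}

lemma isOpen_Uset : IsOpen (Uset x) := by
  have e : Uset x = ((fun q : Pt d => q.1 - q.2) ⁻¹' {0}ᶜ) ∩
      (((fun q : Pt d => q.2 - x) ⁻¹' {0}ᶜ) ∩ ((fun q : Pt d => x - q.1) ⁻¹' {0}ᶜ)) := by
    ext q
    simp [Uset, sub_eq_zero]
  rw [e]
  refine IsOpen.inter ?_ (IsOpen.inter ?_ ?_) <;>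
    exact isOpen_compl_singleton.preimage (by fun_prop)

lemma Uset_eventuallyEq (hp : p ∈ Uset x) (h : ∀ q ∈ Uset x, f q = g q) : f =ᶠ[nhds p] g :=
  Filter.eventuallyEq_of_mem (isOpen_Uset.mem_nhds hp) h

lemma Dy_congrU (hp : p ∈ Uset x) (h : ∀ q ∈ Uset x, f q = g q) (j : Fin d) :
    Dy j f p = Dy j g p := Dy_congr_nhds (Uset_eventuallyEq hp h) j

lemma Dz_congrU (hp : p ∈ Uset x) (h : ∀ q ∈ Uset x, f q = g q) (j : Fin d) :
    Dz j f p = Dz j g p := Dz_congr_nhds (Uset_eventuallyEq hp h) j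

lemma diff_congrU (hp : p ∈ Uset x) (h : ∀ q ∈ Uset x, f q = g q)
    (hg : DifferentiableAt ℝ g p) : DifferentiableAt ℝ f p :=
  hg.congr_of_eventuallyEq (Uset_eventuallyEq hp h)

lemma Dy_add (hf : DifferentiableAt ℝ f p) (hg : DifferentiableAt ℝ g p) (j : Fin d) :
    Dy j (fun q => f q + g q) p = Dy j f p + Dy j g p := by
  rw [Dy, Dy, Dy, fderiv_fun_add hf hg]; simp

lemma Dz_add (hf : DifferentiableAt ℝ f p) (hg : DifferentiableAt ℝ g p) (j : Fin d) :
    Dz j (fun q => f q + g q) p = Dz j f p + Dz j g p := by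
  rw [Dz, Dz, Dz, fderiv_fun_add hf hg]; simp

lemma Dy_const_mul (hf : DifferentiableAt ℝ f p) (c : ℂ) (j : Fin d) :
    Dy j (fun q => c * f q) p = c * Dy j f p := by
  rw [Dy, Dy, fderiv_const_mul hf c]; simp

lemma Dz_const_mul (hf : DifferentiableAt ℝ f p) (c : ℂ) (j : Fin d) :
    Dz j (fun q => c * f q) p = c * Dz j f p := by
  rw [Dz, Dz, fderiv_const_mul hf c]; simp

lemma Dy_mul (hf : DifferentiableAt ℝ f p) (hg : DifferentiableAt ℝ g p) (j : Fin d) :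
    Dy j (fun q => f q * g q) p = Dy j f p * g p + f p * Dy j g p := by
  rw [Dy, Dy, Dy, fderiv_fun_mul hf hg]; simp; ring

lemma Dz_mul (hf : DifferentiableAt ℝ f p) (hg : DifferentiableAt ℝ g p) (j : Fin d) :
    Dz j (fun q => f q * g q) p = Dz j f p * g p + f p * Dz j g p := by
  rw [Dz, Dz, Dz, fderiv_fun_mul hf hg]; simp; ring

end Algebra

section Coords

lemma hasFDerivAt_cr (j : Fin d) (p : Pt d) :
    HasFDerivAt (cr j) (Complex.ofRealCLM.comp
      ((EuclideanSpace.proj j).comp (ContinuousLinearMap.fst ℝ (Es d) (Es d)) -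
       (EuclideanSpace.proj j).comp (ContinuousLinearMap.snd ℝ (Es d) (Es d)))) p := by
  have : (cr j : Pt d → ℂ) = fun p : Pt d =>
      Complex.ofRealCLM (((EuclideanSpace.proj j).comp (ContinuousLinearMap.fst ℝ (Es d) (Es d)) -
        (EuclideanSpace.proj j).comp (ContinuousLinearMap.snd ℝ (Es d) (Es d))) p) := by
    funext q; simp [cr]
  rw [this]
  exact Complex.ofRealCLM.hasFDerivAt.comp p (ContinuousLinearMap.hasFDerivAt _)

lemma hasFDerivAt_cs (j : Fin d) (p : Pt d) :
    HasFDerivAt (cs x j) (Complex.ofRealCLM.comp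
      ((EuclideanSpace.proj j).comp (ContinuousLinearMap.snd ℝ (Es d) (Es d)))) p := by
  have : (cs x j : Pt d → ℂ) = fun p : Pt d =>
      Complex.ofRealCLM (((EuclideanSpace.proj j).comp
        (ContinuousLinearMap.snd ℝ (Es d) (Es d))) p) + (-(x j : ℂ)) := by
    funext q
    simp [cs, Complex.ofRealCLM_apply]
    push_cast
    ring
  rw [this]
  exact (ContinuousLinearMap.hasFDerivAt
    (Complex.ofRealCLM.comp ((EuclideanSpace.proj j).comp
      (ContinuousLinearMap.snd ℝ (Es d) (Es d))))).add_const (-(x j : ℂ))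

lemma hasFDerivAt_ct (j : Fin d) (p : Pt d) :
    HasFDerivAt (ct x j) (-(Complex.ofRealCLM.comp
      ((EuclideanSpace.proj j).comp (ContinuousLinearMap.fst ℝ (Es d) (Es d))))) p := by
  have : (ct x j : Pt d → ℂ) = fun p : Pt d =>
      ((x j : ℂ)) + (-(Complex.ofRealCLM.comp ((EuclideanSpace.proj j).comp
        (ContinuousLinearMap.fst ℝ (Es d) (Es d)))) p) := by
    funext q
    simp [ct, Complex.ofRealCLM_apply]
    push_cast
    ring
  rw [this]
  exact (ContinuousLinearMap.hasFDerivAt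
    (-(Complex.ofRealCLM.comp ((EuclideanSpace.proj j).comp
      (ContinuousLinearMap.fst ℝ (Es d) (Es d)))))).const_add ((x j : ℂ))

lemma diff_cr (j : Fin d) : DifferentiableAt ℝ (cr j) p := (hasFDerivAt_cr j p).differentiableAt
lemma diff_cs (j : Fin d) : DifferentiableAt ℝ (cs x j) p := (hasFDerivAt_cs j p).differentiableAt
lemma diff_ct (j : Fin d) : DifferentiableAt ℝ (ct x j) p := (hasFDerivAt_ct j p).differentiableAt

lemma Dy_cr (j : Fin d) : Dy j (cr j) p = 1 := by
  rw [Dy, (hasFDerivAt_cr j p).fderiv]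
  simp [EuclideanSpace.single_apply]

lemma Dz_cr (j : Fin d) : Dz j (cr j) p = -1 := by
  rw [Dz, (hasFDerivAt_cr j p).fderiv]
  simp [EuclideanSpace.single_apply]

lemma Dy_cs (j : Fin d) : Dy j (cs x j) p = 0 := by
  rw [Dy, (hasFDerivAt_cs j p).fderiv]
  simp

lemma Dz_cs (j : Fin d) : Dz j (cs x j) p = 1 := by
  rw [Dz, (hasFDerivAt_cs j p).fderiv]
  simp [EuclideanSpace.single_apply]

lemma Dy_ct (j : Fin d) : Dy j (ct x j) p = -1 := by
  rw [Dy, (hasFDerivAt_ct j p).fderiv]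
  simp [EuclideanSpace.single_apply]

lemma Dz_ct (j : Fin d) : Dz j (ct x j) p = 0 := by
  rw [Dz, (hasFDerivAt_ct j p).fderiv]
  simp

end Coords

section Contract

def rhoC (p : Pt d) : ℂ := ((‖p.1 - p.2‖ ^ 2 : ℝ) : ℂ)
def sigmaC (x : Es d) (p : Pt d) : ℂ := ((‖p.2 - x‖ ^ 2 : ℝ) : ℂ)
def tauC (x : Es d) (p : Pt d) : ℂ := ((‖x - p.1‖ ^ 2 : ℝ) : ℂ)

lemma inner_sum_eq (v w : Es d) : ((inner ℝ v w : ℝ) : ℂ) = ∑ j, ((v j : ℝ) : ℂ) * ((w j : ℝ) : ℂ) := by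
  rw [PiLp.inner_apply]
  push_cast
  congr 1
  ext j
  simp [RCLike.inner_apply, conj_trivial]; ring

lemma K1 (p : Pt d) : ∑ j, cr j p * cr j p = rhoC p := by
  rw [rhoC, ← real_inner_self_eq_norm_sq, inner_sum_eq]
  simp [cr, PiLp.sub_apply]

lemma K2 (x : Es d) (p : Pt d) : ∑ j, cs x j p * cs x j p = sigmaC x p := by
  rw [sigmaC, ← real_inner_self_eq_norm_sq, inner_sum_eq]
  simp [cs, PiLp.sub_apply]

lemma K3 (x : Es d) (p : Pt d) : ∑ j, ct x j p * ct x j p = tauC x p := by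
  rw [tauC, ← real_inner_self_eq_norm_sq, inner_sum_eq]
  simp [ct, PiLp.sub_apply]

lemma tau_eq (x : Es d) (p : Pt d) :
    tauC x p = rhoC p + sigmaC x p + 2 * ∑ j, cr j p * cs x j p := by
  have hv : (x - p.1 : Es d) = -((p.1 - p.2) + (p.2 - x)) := by abel
  have : ‖(x - p.1 : Es d)‖ ^ 2 = ‖p.1 - p.2‖ ^ 2 + 2 * inner ℝ (p.1 - p.2) (p.2 - x) + ‖p.2 - x‖ ^ 2 := by
    rw [hv, norm_neg]
    exact norm_add_sq_real _ _
  have h2 : ((inner ℝ (p.1 - p.2 : Es d) (p.2 - x : Es d) : ℝ) : ℂ) = ∑ j, cr j p * cs x j p := by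
    rw [inner_sum_eq]
    simp [cr, cs, PiLp.sub_apply]
  rw [tauC, this]
  push_cast
  rw [h2, rhoC, sigmaC]
  push_cast
  ring

lemma sigma_eq (x : Es d) (p : Pt d) :
    sigmaC x p = rhoC p + tauC x p + 2 * ∑ j, cr j p * ct x j p := by
  have hv : (p.2 - x : Es d) = -((p.1 - p.2) + (x - p.1)) := by abel
  have : ‖(p.2 - x : Es d)‖ ^ 2 = ‖p.1 - p.2‖ ^ 2 + 2 * inner ℝ (p.1 - p.2) (x - p.1) + ‖x - p.1‖ ^ 2 := by
    rw [hv, norm_neg]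
    exact norm_add_sq_real _ _
  have h2 : ((inner ℝ (p.1 - p.2 : Es d) (x - p.1 : Es d) : ℝ) : ℂ) = ∑ j, cr j p * ct x j p := by
    rw [inner_sum_eq]
    simp [cr, ct, PiLp.sub_apply]
  rw [sigmaC, this]
  push_cast
  rw [h2, rhoC, tauC]
  push_cast
  ring

lemma rho_eq (x : Es d) (p : Pt d) :
    rhoC p = sigmaC x p + tauC x p + 2 * ∑ j, cs x j p * ct x j p := by
  have hv : (p.1 - p.2 : Es d) = -((p.2 - x) + (x - p.1)) := by abel
  have : ‖(p.1 - p.2 : Es d)‖ ^ 2 = ‖p.2 - x‖ ^ 2 + 2 * inner ℝ (p.2 - x) (x - p.1) + ‖x - p.1‖ ^ 2 := by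
    rw [hv, norm_neg]
    exact norm_add_sq_real _ _
  have h2 : ((inner ℝ (p.2 - x : Es d) (x - p.1 : Es d) : ℝ) : ℂ) = ∑ j, cs x j p * ct x j p := by
    rw [inner_sum_eq]
    simp [cs, ct, PiLp.sub_apply]
  rw [rhoC, this]
  push_cast
  rw [h2, sigmaC, tauC]
  push_cast
  ring

variable {x : Es d} {p : Pt d} {α β γ : ℂ}

lemma N1 (h1 : p.1 ≠ p.2) : rhoC p * Mf x α β γ p = Mf x (α + 1) β γ p := by
  simp only [Mf, rhoC]
  rw [nq_succ (sub_ne_zero.2 h1)]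
  ring

lemma N2 (h2 : p.2 ≠ x) : sigmaC x p * Mf x α β γ p = Mf x α (β + 1) γ p := by
  simp only [Mf, sigmaC]
  rw [nq_succ (sub_ne_zero.2 h2)]
  ring

lemma N3 (h3 : x ≠ p.1) : tauC x p * Mf x α β γ p = Mf x α β (γ + 1) p := by
  simp only [Mf, tauC]
  rw [nq_succ (sub_ne_zero.2 h3)]
  ring

end Contract

section SecondDeriv

variable {x : Es d} {p : Pt d} {α β γ : ℂ}

lemma Dy_Mf_U (k : Fin d) : ∀ q ∈ Uset x, Dy k (Mf x α β γ) q =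
    (2*α) * (cr k q * Mf x (α-1) β γ q) + (-(2*γ)) * (ct x k q * Mf x α β (γ-1) q) := by
  intro q hq; obtain ⟨g1,g2,g3⟩ := hq; rw [Dy_Mf g1 g2 g3]; ring

lemma Dz_Mf_U (k : Fin d) : ∀ q ∈ Uset x, Dz k (Mf x α β γ) q =
    (-(2*α)) * (cr k q * Mf x (α-1) β γ q) + (2*β) * (cs x k q * Mf x α (β-1) γ q) := by
  intro q hq; obtain ⟨g1,g2,g3⟩ := hq; rw [Dz_Mf g1 g2 g3]; ring

lemma DyDy_Mf (hp : p ∈ Uset x) (k : Fin d) :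
    Dy k (Dy k (Mf x α β γ)) p =
      2*α*Mf x (α-1) β γ p + 4*α*(α-1)*(cr k p * cr k p * Mf x (α-2) β γ p)
      - 8*α*γ*(cr k p * ct x k p * Mf x (α-1) β (γ-1) p)
      + 2*γ*Mf x α β (γ-1) p + 4*γ*(γ-1)*(ct x k p * ct x k p * Mf x α β (γ-2) p) := by
  obtain ⟨h1, h2, h3⟩ := hp
  rw [Dy_congrU ⟨h1,h2,h3⟩ (Dy_Mf_U k) k]
  rw [Dy_add (((diff_cr k).fun_mul (diff_Mf h1 h2 h3)).const_mul _)
      (((diff_ct k).fun_mul (diff_Mf h1 h2 h3)).const_mul _) k]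
  rw [Dy_const_mul ((diff_cr k).fun_mul (diff_Mf h1 h2 h3)) _ k]
  rw [Dy_const_mul ((diff_ct k).fun_mul (diff_Mf h1 h2 h3)) _ k]
  rw [Dy_mul (diff_cr k) (diff_Mf h1 h2 h3) k]
  rw [Dy_mul (diff_ct k) (diff_Mf h1 h2 h3) k]
  rw [Dy_cr, Dy_ct, Dy_Mf h1 h2 h3, Dy_Mf h1 h2 h3]
  ring

lemma DzDz_Mf (hp : p ∈ Uset x) (k : Fin d) :
    Dz k (Dz k (Mf x α β γ)) p =
      2*α*Mf x (α-1) β γ p + 4*α*(α-1)*(cr k p * cr k p * Mf x (α-2) β γ p)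
      - 8*α*β*(cr k p * cs x k p * Mf x (α-1) (β-1) γ p)
      + 2*β*Mf x α (β-1) γ p + 4*β*(β-1)*(cs x k p * cs x k p * Mf x α (β-2) γ p) := by
  obtain ⟨h1, h2, h3⟩ := hp
  rw [Dz_congrU ⟨h1,h2,h3⟩ (Dz_Mf_U k) k]
  rw [Dz_add (((diff_cr k).fun_mul (diff_Mf h1 h2 h3)).const_mul _)
      (((diff_cs k).fun_mul (diff_Mf h1 h2 h3)).const_mul _) k]
  rw [Dz_const_mul ((diff_cr k).fun_mul (diff_Mf h1 h2 h3)) _ k]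
  rw [Dz_const_mul ((diff_cs k).fun_mul (diff_Mf h1 h2 h3)) _ k]
  rw [Dz_mul (diff_cr k) (diff_Mf h1 h2 h3) k]
  rw [Dz_mul (diff_cs k) (diff_Mf h1 h2 h3) k]
  rw [Dz_cr, Dz_cs, Dz_Mf h1 h2 h3, Dz_Mf h1 h2 h3]
  ring

lemma DyDz_Mf (hp : p ∈ Uset x) (k : Fin d) :
    Dy k (Dz k (Mf x α β γ)) p =
      -(2*α)*Mf x (α-1) β γ p - 4*α*(α-1)*(cr k p * cr k p * Mf x (α-2) β γ p)
      + 4*α*γ*(cr k p * ct x k p * Mf x (α-1) β (γ-1) p)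
      + 4*α*β*(cs x k p * cr k p * Mf x (α-1) (β-1) γ p)
      - 4*β*γ*(cs x k p * ct x k p * Mf x α (β-1) (γ-1) p) := by
  obtain ⟨h1, h2, h3⟩ := hp
  rw [Dy_congrU ⟨h1,h2,h3⟩ (Dz_Mf_U k) k]
  rw [Dy_add (((diff_cr k).fun_mul (diff_Mf h1 h2 h3)).const_mul _)
      (((diff_cs k).fun_mul (diff_Mf h1 h2 h3)).const_mul _) k]
  rw [Dy_const_mul ((diff_cr k).fun_mul (diff_Mf h1 h2 h3)) _ k]
  rw [Dy_const_mul ((diff_cs k).fun_mul (diff_Mf h1 h2 h3)) _ k]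
  rw [Dy_mul (diff_cr k) (diff_Mf h1 h2 h3) k]
  rw [Dy_mul (diff_cs k) (diff_Mf h1 h2 h3) k]
  rw [Dy_cr, Dy_cs, Dy_Mf h1 h2 h3, Dy_Mf h1 h2 h3]
  ring

end SecondDeriv

section OpLemmas

variable {x : Es d} {p : Pt d} {α β γ : ℂ}

lemma K4' (x : Es d) (p : Pt d) :
    ∑ j, cr j p * cs x j p = (tauC x p - rhoC p - sigmaC x p) / 2 := by
  have := tau_eq x p; linear_combination -this / 2

lemma K5' (x : Es d) (p : Pt d) :
    ∑ j, cr j p * ct x j p = (sigmaC x p - rhoC p - tauC x p) / 2 := by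
  have := sigma_eq x p; linear_combination -this / 2

lemma K6' (x : Es d) (p : Pt d) :
    ∑ j, cs x j p * ct x j p = (rhoC p - sigmaC x p - tauC x p) / 2 := by
  have := rho_eq x p; linear_combination -this / 2

lemma sum_shape (C0 C1 C2 C3 : ℂ) (u v : Fin d → ℂ) :
    ∑ _k : Fin d, C0 = (d : ℂ) * C0 := by
  simp [Finset.sum_const, Finset.card_univ]

/-- Generic contraction: `∑ k, (C0 + u k * u' k * C1 + v k * v' k * C2 + w k * w' k * C3)`. -/
lemma sum_contract (C0 C1 C2 C3 : ℂ) (u u' v v' w w' : Fin d → ℂ) :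
    (∑ k : Fin d, (C0 + (u k * u' k) * C1 + (v k * v' k) * C2 + (w k * w' k) * C3)) =
      (d : ℂ) * C0 + (∑ k, u k * u' k) * C1 + (∑ k, v k * v' k) * C2
        + (∑ k, w k * w' k) * C3 := by
  rw [Finset.sum_add_distrib, Finset.sum_add_distrib, Finset.sum_add_distrib,
    Finset.sum_const, Finset.card_univ, ← Finset.sum_mul, ← Finset.sum_mul, ← Finset.sum_mul]
  simp [nsmul_eq_mul]

lemma LapY_Mf (hp : p ∈ Uset x) :
    LapY (Mf x α β γ) p =
      2*α*(2*α+2*γ+(d:ℂ)-2) * Mf x (α-1) β γ p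
      + 2*γ*(2*γ+2*α+(d:ℂ)-2) * Mf x α β (γ-1) p
      - 4*α*γ * Mf x (α-1) (β+1) (γ-1) p := by
  obtain ⟨h1, h2, h3⟩ := hp
  rw [LapY]
  rw [Finset.sum_congr rfl (fun k _ => DyDy_Mf ⟨h1,h2,h3⟩ k)]
  have shape : ∀ k : Fin d,
      2*α*Mf x (α-1) β γ p + 4*α*(α-1)*(cr k p * cr k p * Mf x (α-2) β γ p)
      - 8*α*γ*(cr k p * ct x k p * Mf x (α-1) β (γ-1) p)
      + 2*γ*Mf x α β (γ-1) p + 4*γ*(γ-1)*(ct x k p * ct x k p * Mf x α β (γ-2) p)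
      = (2*α*Mf x (α-1) β γ p + 2*γ*Mf x α β (γ-1) p)
        + (cr k p * cr k p) * (4*α*(α-1)*Mf x (α-2) β γ p)
        + (cr k p * ct x k p) * (-(8*α*γ)*Mf x (α-1) β (γ-1) p)
        + (ct x k p * ct x k p) * (4*γ*(γ-1)*Mf x α β (γ-2) p) := fun k => by ring
  rw [Finset.sum_congr rfl (fun k _ => shape k), sum_contract, K1, K3, K5']
  have e1 := N1 (x := x) (α := α - 2) (β := β) (γ := γ) (p := p) h1
  have e2 := N2 (x := x) (α := α - 1) (β := β) (γ := γ - 1) (p := p) h2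
  have e3 := N1 (x := x) (α := α - 1) (β := β) (γ := γ - 1) (p := p) h1
  have e4 := N3 (x := x) (α := α - 1) (β := β) (γ := γ - 1) (p := p) h3
  have e5 := N3 (x := x) (α := α) (β := β) (γ := γ - 2) (p := p) h3
  ring_nf at e1 e2 e3 e4 e5 ⊢
  linear_combination (4*α*(α-1)) * e1 + (-4*α*γ) * e2 + (4*α*γ) * e3 + (4*α*γ) * e4
    + (4*γ*(γ-1)) * e5

end OpLemmas

section OpLemmas2

variable {x : Es d} {p : Pt d} {α β γ : ℂ}

lemma sum_contract4 (C0 C1 C2 C3 C4 : ℂ) (u u' v v' w w' s s' : Fin d → ℂ) :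
    (∑ k : Fin d, (C0 + (u k * u' k) * C1 + (v k * v' k) * C2 + (w k * w' k) * C3
        + (s k * s' k) * C4)) =
      (d : ℂ) * C0 + (∑ k, u k * u' k) * C1 + (∑ k, v k * v' k) * C2
        + (∑ k, w k * w' k) * C3 + (∑ k, s k * s' k) * C4 := by
  rw [Finset.sum_add_distrib, Finset.sum_add_distrib, Finset.sum_add_distrib,
    Finset.sum_add_distrib, Finset.sum_const, Finset.card_univ,
    ← Finset.sum_mul, ← Finset.sum_mul, ← Finset.sum_mul, ← Finset.sum_mul]
  simp [nsmul_eq_mul]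

lemma LapZ_Mf (hp : p ∈ Uset x) :
    LapZ (Mf x α β γ) p =
      2*α*(2*α+2*β+(d:ℂ)-2) * Mf x (α-1) β γ p
      + 2*β*(2*β+2*α+(d:ℂ)-2) * Mf x α (β-1) γ p
      - 4*α*β * Mf x (α-1) (β-1) (γ+1) p := by
  obtain ⟨h1, h2, h3⟩ := hp
  rw [LapZ]
  rw [Finset.sum_congr rfl (fun k _ => DzDz_Mf ⟨h1,h2,h3⟩ k)]
  have shape : ∀ k : Fin d,
      2*α*Mf x (α-1) β γ p + 4*α*(α-1)*(cr k p * cr k p * Mf x (α-2) β γ p)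
      - 8*α*β*(cr k p * cs x k p * Mf x (α-1) (β-1) γ p)
      + 2*β*Mf x α (β-1) γ p + 4*β*(β-1)*(cs x k p * cs x k p * Mf x α (β-2) γ p)
      = (2*α*Mf x (α-1) β γ p + 2*β*Mf x α (β-1) γ p)
        + (cr k p * cr k p) * (4*α*(α-1)*Mf x (α-2) β γ p)
        + (cr k p * cs x k p) * (-(8*α*β)*Mf x (α-1) (β-1) γ p)
        + (cs x k p * cs x k p) * (4*β*(β-1)*Mf x α (β-2) γ p)
        + (cs x k p * ct x k p) * 0 := fun k => by ring
  rw [Finset.sum_congr rfl (fun k _ => shape k), sum_contract4, K1, K2, K4']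
  have e1 := N1 (x := x) (α := α - 2) (β := β) (γ := γ) (p := p) h1
  have e2 := N3 (x := x) (α := α - 1) (β := β - 1) (γ := γ) (p := p) h3
  have e3 := N1 (x := x) (α := α - 1) (β := β - 1) (γ := γ) (p := p) h1
  have e4 := N2 (x := x) (α := α - 1) (β := β - 1) (γ := γ) (p := p) h2
  have e5 := N2 (x := x) (α := α) (β := β - 2) (γ := γ) (p := p) h2
  ring_nf at e1 e2 e3 e4 e5 ⊢
  linear_combination (4*α*(α-1)) * e1 + (-4*α*β) * e2 + (4*α*β) * e3 + (4*α*β) * e4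
    + (4*β*(β-1)) * e5

lemma sumDyDz_Mf (hp : p ∈ Uset x) :
    ∑ k, Dy k (Dz k (Mf x α β γ)) p =
      (-2*α*(d:ℂ) - 4*α*(α-1) - 2*α*γ - 2*α*β) * Mf x (α-1) β γ p
      + 2*α*γ * Mf x (α-1) (β+1) (γ-1) p
      + (-2*α*γ + 2*β*γ) * Mf x α β (γ-1) p
      + 2*α*β * Mf x (α-1) (β-1) (γ+1) p
      + (-2*α*β + 2*β*γ) * Mf x α (β-1) γ p
      - 2*β*γ * Mf x (α+1) (β-1) (γ-1) p := by
  obtain ⟨h1, h2, h3⟩ := hp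
  rw [Finset.sum_congr rfl (fun k _ => DyDz_Mf ⟨h1,h2,h3⟩ k)]
  have shape : ∀ k : Fin d,
      -(2*α)*Mf x (α-1) β γ p - 4*α*(α-1)*(cr k p * cr k p * Mf x (α-2) β γ p)
      + 4*α*γ*(cr k p * ct x k p * Mf x (α-1) β (γ-1) p)
      + 4*α*β*(cs x k p * cr k p * Mf x (α-1) (β-1) γ p)
      - 4*β*γ*(cs x k p * ct x k p * Mf x α (β-1) (γ-1) p)
      = (-(2*α)*Mf x (α-1) β γ p)
        + (cr k p * cr k p) * (-(4*α*(α-1))*Mf x (α-2) β γ p)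
        + (cr k p * ct x k p) * (4*α*γ*Mf x (α-1) β (γ-1) p)
        + (cr k p * cs x k p) * (4*α*β*Mf x (α-1) (β-1) γ p)
        + (cs x k p * ct x k p) * (-(4*β*γ)*Mf x α (β-1) (γ-1) p) := fun k => by ring
  rw [Finset.sum_congr rfl (fun k _ => shape k), sum_contract4, K1, K5', K4', K6']
  have e1 := N1 (x := x) (α := α - 2) (β := β) (γ := γ) (p := p) h1
  have e2 := N2 (x := x) (α := α - 1) (β := β) (γ := γ - 1) (p := p) h2
  have e3 := N1 (x := x) (α := α - 1) (β := β) (γ := γ - 1) (p := p) h1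
  have e4 := N3 (x := x) (α := α - 1) (β := β) (γ := γ - 1) (p := p) h3
  have e5 := N3 (x := x) (α := α - 1) (β := β - 1) (γ := γ) (p := p) h3
  have e6 := N1 (x := x) (α := α - 1) (β := β - 1) (γ := γ) (p := p) h1
  have e7 := N2 (x := x) (α := α - 1) (β := β - 1) (γ := γ) (p := p) h2
  have e8 := N1 (x := x) (α := α) (β := β - 1) (γ := γ - 1) (p := p) h1
  have e9 := N2 (x := x) (α := α) (β := β - 1) (γ := γ - 1) (p := p) h2
  have e10 := N3 (x := x) (α := α) (β := β - 1) (γ := γ - 1) (p := p) h3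
  ring_nf at e1 e2 e3 e4 e5 e6 e7 e8 e9 e10 ⊢
  linear_combination (-4*α*(α-1)) * e1 + (2*α*γ) * e2 + (-2*α*γ) * e3 + (-2*α*γ) * e4
    + (2*α*β) * e5 + (-2*α*β) * e6 + (-2*α*β) * e7
    + (-2*β*γ) * e8 + (2*β*γ) * e9 + (2*β*γ) * e10

lemma Ysum_Mf (hp : p ∈ Uset x) :
    ∑ j, (-(cr j p)) * Dy j (Mf x α β γ) p =
      (-2*α - γ) * Mf x α β γ p + γ * Mf x α (β+1) (γ-1) p - γ * Mf x (α+1) β (γ-1) p := by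
  obtain ⟨h1, h2, h3⟩ := hp
  have shape : ∀ j : Fin d, (-(cr j p)) * Dy j (Mf x α β γ) p
      = 0 + (cr j p * cr j p) * (-(2*α)*Mf x (α-1) β γ p)
        + (cr j p * ct x j p) * (2*γ*Mf x α β (γ-1) p)
        + (cr j p * cr j p) * 0 + (cr j p * cr j p) * 0 := by
    intro j; rw [Dy_Mf h1 h2 h3]; ring
  rw [Finset.sum_congr rfl (fun j _ => shape j), sum_contract4, K1, K5']
  have e1 := N1 (x := x) (α := α - 1) (β := β) (γ := γ) (p := p) h1
  have e2 := N2 (x := x) (α := α) (β := β) (γ := γ - 1) (p := p) h2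
  have e3 := N1 (x := x) (α := α) (β := β) (γ := γ - 1) (p := p) h1
  have e4 := N3 (x := x) (α := α) (β := β) (γ := γ - 1) (p := p) h3
  ring_nf at e1 e2 e3 e4 ⊢
  linear_combination (-2*α) * e1 + γ * e2 - γ * e3 - γ * e4

lemma Zsum_Mf (hp : p ∈ Uset x) :
    ∑ j, (cr j p) * Dz j (Mf x α β γ) p =
      (-2*α - β) * Mf x α β γ p + β * Mf x α (β-1) (γ+1) p - β * Mf x (α+1) (β-1) γ p := by
  obtain ⟨h1, h2, h3⟩ := hp
  have shape : ∀ j : Fin d, (cr j p) * Dz j (Mf x α β γ) p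
      = 0 + (cr j p * cr j p) * (-(2*α)*Mf x (α-1) β γ p)
        + (cr j p * cs x j p) * (2*β*Mf x α (β-1) γ p)
        + (cr j p * cr j p) * 0 + (cr j p * cr j p) * 0 := by
    intro j; rw [Dz_Mf h1 h2 h3]; ring
  rw [Finset.sum_congr rfl (fun j _ => shape j), sum_contract4, K1, K4']
  have e1 := N1 (x := x) (α := α - 1) (β := β) (γ := γ) (p := p) h1
  have e2 := N3 (x := x) (α := α) (β := β - 1) (γ := γ) (p := p) h3
  have e3 := N1 (x := x) (α := α) (β := β - 1) (γ := γ) (p := p) h1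
  have e4 := N2 (x := x) (α := α) (β := β - 1) (γ := γ) (p := p) h2
  ring_nf at e1 e2 e3 e4 ⊢
  linear_combination (-2*α) * e1 + β * e2 - β * e3 - β * e4

end OpLemmas2

section Plumbing

variable {x : Es d} {p : Pt d} {α β γ : ℂ} {f : Pt d → ℂ}

lemma diff_DyMf (hp : p ∈ Uset x) (k : Fin d) :
    DifferentiableAt ℝ (Dy k (Mf x α β γ)) p := by
  obtain ⟨h1, h2, h3⟩ := hp
  exact diff_congrU ⟨h1,h2,h3⟩ (Dy_Mf_U k)
    ((((diff_cr k).fun_mul (diff_Mf h1 h2 h3)).const_mul _).fun_add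
      (((diff_ct k).fun_mul (diff_Mf h1 h2 h3)).const_mul _))

lemma diff_DzMf (hp : p ∈ Uset x) (k : Fin d) :
    DifferentiableAt ℝ (Dz k (Mf x α β γ)) p := by
  obtain ⟨h1, h2, h3⟩ := hp
  exact diff_congrU ⟨h1,h2,h3⟩ (Dz_Mf_U k)
    ((((diff_cr k).fun_mul (diff_Mf h1 h2 h3)).const_mul _).fun_add
      (((diff_cs k).fun_mul (diff_Mf h1 h2 h3)).const_mul _))

variable {c₁ c₂ c₃ α₁ β₁ γ₁ α₂ β₂ γ₂ α₃ β₃ γ₃ : ℂ}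

/-- linearity of `Dy` at a point over a 3-term Mf combination -/
lemma Dy_combo3 (hp : p ∈ Uset x)
    (hf : ∀ q ∈ Uset x, f q = c₁ * Mf x α₁ β₁ γ₁ q + c₂ * Mf x α₂ β₂ γ₂ q
      + c₃ * Mf x α₃ β₃ γ₃ q) (j : Fin d) :
    Dy j f p = c₁ * Dy j (Mf x α₁ β₁ γ₁) p + c₂ * Dy j (Mf x α₂ β₂ γ₂) p
      + c₃ * Dy j (Mf x α₃ β₃ γ₃) p := by
  obtain ⟨h1, h2, h3⟩ := hp
  rw [Dy_congrU ⟨h1,h2,h3⟩ hf j]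
  rw [Dy_add (((diff_Mf h1 h2 h3).const_mul _).fun_add ((diff_Mf h1 h2 h3).const_mul _))
    ((diff_Mf h1 h2 h3).const_mul _) j]
  rw [Dy_add ((diff_Mf h1 h2 h3).const_mul _) ((diff_Mf h1 h2 h3).const_mul _) j]
  rw [Dy_const_mul (diff_Mf h1 h2 h3) _ j, Dy_const_mul (diff_Mf h1 h2 h3) _ j,
    Dy_const_mul (diff_Mf h1 h2 h3) _ j]

lemma Dz_combo3 (hp : p ∈ Uset x)
    (hf : ∀ q ∈ Uset x, f q = c₁ * Mf x α₁ β₁ γ₁ q + c₂ * Mf x α₂ β₂ γ₂ q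
      + c₃ * Mf x α₃ β₃ γ₃ q) (j : Fin d) :
    Dz j f p = c₁ * Dz j (Mf x α₁ β₁ γ₁) p + c₂ * Dz j (Mf x α₂ β₂ γ₂) p
      + c₃ * Dz j (Mf x α₃ β₃ γ₃) p := by
  obtain ⟨h1, h2, h3⟩ := hp
  rw [Dz_congrU ⟨h1,h2,h3⟩ hf j]
  rw [Dz_add (((diff_Mf h1 h2 h3).const_mul _).fun_add ((diff_Mf h1 h2 h3).const_mul _))
    ((diff_Mf h1 h2 h3).const_mul _) j]
  rw [Dz_add ((diff_Mf h1 h2 h3).const_mul _) ((diff_Mf h1 h2 h3).const_mul _) j]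
  rw [Dz_const_mul (diff_Mf h1 h2 h3) _ j, Dz_const_mul (diff_Mf h1 h2 h3) _ j,
    Dz_const_mul (diff_Mf h1 h2 h3) _ j]

lemma LapY_combo3 (hp : p ∈ Uset x)
    (hf : ∀ q ∈ Uset x, f q = c₁ * Mf x α₁ β₁ γ₁ q + c₂ * Mf x α₂ β₂ γ₂ q
      + c₃ * Mf x α₃ β₃ γ₃ q) :
    LapY f p = c₁ * LapY (Mf x α₁ β₁ γ₁) p + c₂ * LapY (Mf x α₂ β₂ γ₂) p
      + c₃ * LapY (Mf x α₃ β₃ γ₃) p := by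
  simp only [LapY]
  have step : ∀ k : Fin d, Dy k (Dy k f) p
      = c₁ * Dy k (Dy k (Mf x α₁ β₁ γ₁)) p + c₂ * Dy k (Dy k (Mf x α₂ β₂ γ₂)) p
        + c₃ * Dy k (Dy k (Mf x α₃ β₃ γ₃)) p := by
    intro k
    have hDy : ∀ q ∈ Uset x, Dy k f q = c₁ * Dy k (Mf x α₁ β₁ γ₁) q
        + c₂ * Dy k (Mf x α₂ β₂ γ₂) q + c₃ * Dy k (Mf x α₃ β₃ γ₃) q :=
      fun q hq => Dy_combo3 hq hf k
    rw [Dy_congrU hp hDy k]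
    rw [Dy_add (((diff_DyMf hp k).const_mul _).fun_add ((diff_DyMf hp k).const_mul _))
      ((diff_DyMf hp k).const_mul _) k]
    rw [Dy_add ((diff_DyMf hp k).const_mul _) ((diff_DyMf hp k).const_mul _) k]
    rw [Dy_const_mul (diff_DyMf hp k) _ k, Dy_const_mul (diff_DyMf hp k) _ k,
      Dy_const_mul (diff_DyMf hp k) _ k]
  rw [Finset.sum_congr rfl (fun k _ => step k)]
  rw [Finset.sum_add_distrib, Finset.sum_add_distrib, ← Finset.mul_sum, ← Finset.mul_sum,
    ← Finset.mul_sum]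

lemma LapZ_combo3 (hp : p ∈ Uset x)
    (hf : ∀ q ∈ Uset x, f q = c₁ * Mf x α₁ β₁ γ₁ q + c₂ * Mf x α₂ β₂ γ₂ q
      + c₃ * Mf x α₃ β₃ γ₃ q) :
    LapZ f p = c₁ * LapZ (Mf x α₁ β₁ γ₁) p + c₂ * LapZ (Mf x α₂ β₂ γ₂) p
      + c₃ * LapZ (Mf x α₃ β₃ γ₃) p := by
  simp only [LapZ]
  have step : ∀ k : Fin d, Dz k (Dz k f) p
      = c₁ * Dz k (Dz k (Mf x α₁ β₁ γ₁)) p + c₂ * Dz k (Dz k (Mf x α₂ β₂ γ₂)) p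
        + c₃ * Dz k (Dz k (Mf x α₃ β₃ γ₃)) p := by
    intro k
    have hDz : ∀ q ∈ Uset x, Dz k f q = c₁ * Dz k (Mf x α₁ β₁ γ₁) q
        + c₂ * Dz k (Mf x α₂ β₂ γ₂) q + c₃ * Dz k (Mf x α₃ β₃ γ₃) q :=
      fun q hq => Dz_combo3 hq hf k
    rw [Dz_congrU hp hDz k]
    rw [Dz_add (((diff_DzMf hp k).const_mul _).fun_add ((diff_DzMf hp k).const_mul _))
      ((diff_DzMf hp k).const_mul _) k]
    rw [Dz_add ((diff_DzMf hp k).const_mul _) ((diff_DzMf hp k).const_mul _) k]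
    rw [Dz_const_mul (diff_DzMf hp k) _ k, Dz_const_mul (diff_DzMf hp k) _ k,
      Dz_const_mul (diff_DzMf hp k) _ k]
  rw [Finset.sum_congr rfl (fun k _ => step k)]
  rw [Finset.sum_add_distrib, Finset.sum_add_distrib, ← Finset.mul_sum, ← Finset.mul_sum,
    ← Finset.mul_sum]

lemma sumDyDz_combo3 (hp : p ∈ Uset x)
    (hf : ∀ q ∈ Uset x, f q = c₁ * Mf x α₁ β₁ γ₁ q + c₂ * Mf x α₂ β₂ γ₂ q
      + c₃ * Mf x α₃ β₃ γ₃ q) :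
    ∑ k, Dy k (Dz k f) p = c₁ * ∑ k, Dy k (Dz k (Mf x α₁ β₁ γ₁)) p
      + c₂ * ∑ k, Dy k (Dz k (Mf x α₂ β₂ γ₂)) p
      + c₃ * ∑ k, Dy k (Dz k (Mf x α₃ β₃ γ₃)) p := by
  have step : ∀ k : Fin d, Dy k (Dz k f) p
      = c₁ * Dy k (Dz k (Mf x α₁ β₁ γ₁)) p + c₂ * Dy k (Dz k (Mf x α₂ β₂ γ₂)) p
        + c₃ * Dy k (Dz k (Mf x α₃ β₃ γ₃)) p := by
    intro k
    have hDz : ∀ q ∈ Uset x, Dz k f q = c₁ * Dz k (Mf x α₁ β₁ γ₁) q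
        + c₂ * Dz k (Mf x α₂ β₂ γ₂) q + c₃ * Dz k (Mf x α₃ β₃ γ₃) q :=
      fun q hq => Dz_combo3 hq hf k
    rw [Dy_congrU hp hDz k]
    rw [Dy_add (((diff_DzMf hp k).const_mul _).fun_add ((diff_DzMf hp k).const_mul _))
      ((diff_DzMf hp k).const_mul _) k]
    rw [Dy_add ((diff_DzMf hp k).const_mul _) ((diff_DzMf hp k).const_mul _) k]
    rw [Dy_const_mul (diff_DzMf hp k) _ k, Dy_const_mul (diff_DzMf hp k) _ k,
      Dy_const_mul (diff_DzMf hp k) _ k]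
  rw [Finset.sum_congr rfl (fun k _ => step k)]
  rw [Finset.sum_add_distrib, Finset.sum_add_distrib, ← Finset.mul_sum, ← Finset.mul_sum,
    ← Finset.mul_sum]

end Plumbing

lemma nq_add_nat {v : Es d} (hv : v ≠ 0) (α : ℂ) (n : ℕ) :
    nq (α + n) v = ((‖v‖ ^ 2 : ℝ) : ℂ) ^ n * nq α v := by
  induction n with
  | zero => simp
  | succ m ih =>
      have h : (α + ((m+1 : ℕ) : ℂ)) = (α + m) + 1 := by push_cast; ring
      rw [h, nq_succ hv, ih]
      push_cast
      ring

lemma cpow_norm_eq_nq {v : Es d} (hv : v ≠ 0) (β : ℂ) :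
    ((‖v‖ : ℂ)) ^ β = nq (β / 2) v := by
  have h0 : (‖v‖ : ℝ) ≠ 0 := norm_ne_zero_iff.2 hv
  have h0' : ((‖v‖ : ℂ)) ≠ 0 := by exact_mod_cast h0
  have h2 : nq (β/2) v = (‖v‖:ℂ)^(β/2) * (‖v‖:ℂ)^(β/2) := by
    rw [nq, sq]
    exact_mod_cast Complex.mul_cpow_ofReal_nonneg (norm_nonneg v) (norm_nonneg v) (β/2)
  rw [h2, ← Complex.cpow_add _ _ h0', show β/2 + β/2 = β from by ring]


set_option maxHeartbeats 2000000 in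
set_option maxRecDepth 100000 in
/-- Bernstein–Sato identity at smooth points:
`B_β l_{β+2₁} = b(β) l_β` on the set where `x₁, x₂, x₃` are pairwise distinct, with
`b(β) = (β₁+d)(β₁+2)(β₁+β₂+β₃+2d)(β₁+β₂+β₃+d+2)`. -/
theorem bernstein_sato_identity (d : ℕ) (hd : 2 ≤ d) (β₁ β₂ β₃ : ℂ)
    (x y z : EuclideanSpace ℝ (Fin d))
    (hxy : x ≠ y) (hyz : y ≠ z) (hzx : z ≠ x) :
    Bop β₁ β₂ β₃
        (fun p => (‖p.1 - p.2‖ : ℂ) ^ (β₁ + 2) * (‖p.2 - x‖ : ℂ) ^ β₂ *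
          (‖x - p.1‖ : ℂ) ^ β₃) (y, z) =
      (β₁ + (d : ℂ)) * (β₁ + 2) * (β₁ + β₂ + β₃ + 2 * d) * (β₁ + β₂ + β₃ + (d : ℂ) + 2) *
        ((‖y - z‖ : ℂ) ^ β₁ * (‖z - x‖ : ℂ) ^ β₂ * (‖x - y‖ : ℂ) ^ β₃) := by
  have hp : ((y, z) : Pt d) ∈ Uset x := ⟨hyz, hzx, hxy⟩
  have hr : (y - z : Es d) ≠ 0 := sub_ne_zero.2 hyz
  have hs : (z - x : Es d) ≠ 0 := sub_ne_zero.2 hzx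
  have ht : (x - y : Es d) ≠ 0 := sub_ne_zero.2 hxy
  simp only [Bop]
  set A := (β₁ + 2)/2 with hA
  set B := β₂/2 with hB
  set C := β₃/2 with hC
  set D := (d : ℂ) with hD
  have hu3 : ∀ q ∈ Uset x, (fun p : Pt d => (‖p.1 - p.2‖ : ℂ) ^ (β₁ + 2) *
      (‖p.2 - x‖ : ℂ) ^ β₂ * (‖x - p.1‖ : ℂ) ^ β₃) q
      = 1 * Mf x A B C q + 0 * Mf x 0 0 0 q + 0 * Mf x 0 0 0 q := by
    intro q hq; obtain ⟨g1,g2,g3⟩ := hq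
    simp only [Mf]
    rw [cpow_norm_eq_nq (sub_ne_zero.2 g1), cpow_norm_eq_nq (sub_ne_zero.2 g2),
      cpow_norm_eq_nq (sub_ne_zero.2 g3), ← hA, ← hB, ← hC]
    ring
  have hV : ∀ q ∈ Uset x, LapZ (fun p : Pt d => (‖p.1 - p.2‖ : ℂ) ^ (β₁ + 2) *
      (‖p.2 - x‖ : ℂ) ^ β₂ * (‖x - p.1‖ : ℂ) ^ β₃) q =
      (2*A*(2*A+2*B+D-2)) * Mf x (A-1) B C q + (2*B*(2*B+2*A+D-2)) * Mf x A (B-1) C q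
        + (-(4*A*B)) * Mf x (A-1) (B-1) (C+1) q := by
    intro q hq
    rw [LapZ_combo3 hq hu3]; simp only [LapZ_Mf hq]
    ring
  have hW : ∀ q ∈ Uset x, LapY (fun p : Pt d => (‖p.1 - p.2‖ : ℂ) ^ (β₁ + 2) *
      (‖p.2 - x‖ : ℂ) ^ β₂ * (‖x - p.1‖ : ℂ) ^ β₃) q =
      (2*A*(2*A+2*C+D-2)) * Mf x (A-1) B C q + (2*C*(2*C+2*A+D-2)) * Mf x A B (C-1) q
        + (-(4*A*C)) * Mf x (A-1) (B+1) (C-1) q := by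
    intro q hq
    rw [LapY_combo3 hq hu3]; simp only [LapY_Mf hq]
    ring
  rw [LapY_combo3 hp hV]; simp only [LapY_Mf hp]
  have step2 : ∀ j : Fin d, ((z j - y j : ℝ) : ℂ) * Dy j (LapZ (fun p : Pt d =>
      (‖p.1 - p.2‖ : ℂ) ^ (β₁ + 2) * (‖p.2 - x‖ : ℂ) ^ β₂ * (‖x - p.1‖ : ℂ) ^ β₃)) (y, z)
      = (2*A*(2*A+2*B+D-2)) * ((-(cr j (y, z))) * Dy j (Mf x (A-1) B C) (y, z))
        + (2*B*(2*B+2*A+D-2)) * ((-(cr j (y, z))) * Dy j (Mf x A (B-1) C) (y, z))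
        + (-(4*A*B)) * ((-(cr j (y, z))) * Dy j (Mf x (A-1) (B-1) (C+1)) (y, z)) := by
    intro j
    rw [Dy_combo3 hp hV j]
    simp only [cr]
    push_cast
    ring
  rw [Finset.sum_congr rfl (fun j _ => step2 j)]
  rw [Finset.sum_add_distrib, Finset.sum_add_distrib, ← Finset.mul_sum, ← Finset.mul_sum,
    ← Finset.mul_sum]
  simp only [Ysum_Mf hp]
  have step3 : ∀ j : Fin d, ((y j - z j : ℝ) : ℂ) * Dz j (LapY (fun p : Pt d =>
      (‖p.1 - p.2‖ : ℂ) ^ (β₁ + 2) * (‖p.2 - x‖ : ℂ) ^ β₂ * (‖x - p.1‖ : ℂ) ^ β₃)) (y, z)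
      = (2*A*(2*A+2*C+D-2)) * ((cr j (y, z)) * Dz j (Mf x (A-1) B C) (y, z))
        + (2*C*(2*C+2*A+D-2)) * ((cr j (y, z)) * Dz j (Mf x A B (C-1)) (y, z))
        + (-(4*A*C)) * ((cr j (y, z)) * Dz j (Mf x (A-1) (B+1) (C-1)) (y, z)) := by
    intro j
    rw [Dz_combo3 hp hW j]
    simp only [cr]
    push_cast
    ring
  rw [Finset.sum_congr rfl (fun j _ => step3 j)]
  rw [Finset.sum_add_distrib, Finset.sum_add_distrib, ← Finset.mul_sum, ← Finset.mul_sum,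
    ← Finset.mul_sum]
  simp only [Zsum_Mf hp]
  rw [hV (y, z) hp, hW (y, z) hp]
  rw [sumDyDz_combo3 hp hu3]; simp only [sumDyDz_Mf hp]
  rw [cpow_norm_eq_nq hr β₁, cpow_norm_eq_nq hs β₂, cpow_norm_eq_nq ht β₃]
  simp only [Mf]
  simp only [hA, hB, hC, hD]
  ring_nf
  have ga1 : nq (β₁ * (1/2)) (y - z) = ((‖(y - z : Es d)‖^2 : ℝ) : ℂ)^(1:ℕ) *
      nq (-1 + β₁ * (1/2)) (y - z) := by
    have h := nq_add_nat hr (-1 + β₁ * (1/2)) 1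
    rw [show (-1 + β₁ * (1/2) + ((1:ℕ):ℂ)) = β₁ * (1/2) from by push_cast; ring] at h
    exact h
  have ga2 : nq (1 + β₁ * (1/2)) (y - z) = ((‖(y - z : Es d)‖^2 : ℝ) : ℂ)^(2:ℕ) *
      nq (-1 + β₁ * (1/2)) (y - z) := by
    have h := nq_add_nat hr (-1 + β₁ * (1/2)) 2
    rw [show (-1 + β₁ * (1/2) + ((2:ℕ):ℂ)) = 1 + β₁ * (1/2) from by push_cast; ring] at h
    exact h
  have ga3 : nq (2 + β₁ * (1/2)) (y - z) = ((‖(y - z : Es d)‖^2 : ℝ) : ℂ)^(3:ℕ) *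
      nq (-1 + β₁ * (1/2)) (y - z) := by
    have h := nq_add_nat hr (-1 + β₁ * (1/2)) 3
    rw [show (-1 + β₁ * (1/2) + ((3:ℕ):ℂ)) = 2 + β₁ * (1/2) from by push_cast; ring] at h
    exact h
  have gb1 : nq (β₂ * (1/2)) (z - x) = ((‖(z - x : Es d)‖^2 : ℝ) : ℂ)^(1:ℕ) *
      nq (-1 + β₂ * (1/2)) (z - x) := by
    have h := nq_add_nat hs (-1 + β₂ * (1/2)) 1
    rw [show (-1 + β₂ * (1/2) + ((1:ℕ):ℂ)) = β₂ * (1/2) from by push_cast; ring] at h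
    exact h
  have gb2 : nq (1 + β₂ * (1/2)) (z - x) = ((‖(z - x : Es d)‖^2 : ℝ) : ℂ)^(2:ℕ) *
      nq (-1 + β₂ * (1/2)) (z - x) := by
    have h := nq_add_nat hs (-1 + β₂ * (1/2)) 2
    rw [show (-1 + β₂ * (1/2) + ((2:ℕ):ℂ)) = 1 + β₂ * (1/2) from by push_cast; ring] at h
    exact h
  have gc1 : nq (β₃ * (1/2)) (x - y) = ((‖(x - y : Es d)‖^2 : ℝ) : ℂ)^(1:ℕ) *
      nq (-1 + β₃ * (1/2)) (x - y) := by
    have h := nq_add_nat ht (-1 + β₃ * (1/2)) 1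
    rw [show (-1 + β₃ * (1/2) + ((1:ℕ):ℂ)) = β₃ * (1/2) from by push_cast; ring] at h
    exact h
  have gc2 : nq (1 + β₃ * (1/2)) (x - y) = ((‖(x - y : Es d)‖^2 : ℝ) : ℂ)^(2:ℕ) *
      nq (-1 + β₃ * (1/2)) (x - y) := by
    have h := nq_add_nat ht (-1 + β₃ * (1/2)) 2
    rw [show (-1 + β₃ * (1/2) + ((2:ℕ):ℂ)) = 1 + β₃ * (1/2) from by push_cast; ring] at h
    exact h
  rw [ga1, ga2, ga3, gb1, gb2, gc1, gc2]
  ring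
end
end
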